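/- arXiv:1910.04042 — 13 statements merged into one kernel-verified Lean document; each statement's English description precedes it below -/
import Mathlib

section
/- Let R be a commutative ring, let X be an R-module, and let s, t and 1−st be invertible elements of R. Let S = S_{s,t} be the bialexander switch on X, and let τ : X×X → X×X be a bijection that is left and right invertible. Then (X,S,τ) is a singular pair if and only if for all x,y ∈ X the following hold: (i) τ(λx, λy) = λ·τ(x,y) for λ ∈ {s, t, −1}; (ii) τ(x,y) = τ(0, y − s⁻¹x) + (x, s⁻¹x); (iii) τ(x,y) = τ(x − sy, 0) + (sy, y); (iv) t·τ¹(0,x) = s·τ²(x,0). In particular τ is fully determined by the values τ¹(0,x), x ∈ X. -/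
namespace Paper

/-- The flip map on `X × X`. -/
def flipMap (X : Type*) : X × X → X × X := fun p => (p.2, p.1)

/-- `F × id` acting on triples. -/
def onFst {X : Type*} (F : X × X → X × X) : X × X × X → X × X × X :=
  fun p => ((F (p.1, p.2.1)).1, (F (p.1, p.2.1)).2, p.2.2)

/-- `id × F` acting on triples. -/
def onSnd {X : Type*} (F : X × X → X × X) : X × X × X → X × X × X :=
  fun p => (p.1, F p.2)

/-- `F` is left invertible: for all `x z` there is a unique `y` with `F¹(x,y) = z`. -/
def LeftInvertible {X : Type*} (F : X × X → X × X) : Prop :=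
  ∀ x z : X, ∃! y : X, (F (x, y)).1 = z

/-- `F` is right invertible: for all `y t` there is a unique `x` with `F²(x,y) = t`. -/
def RightInvertible {X : Type*} (F : X × X → X × X) : Prop :=
  ∀ y t : X, ∃! x : X, (F (x, y)).2 = t

/-- Set-theoretic solution of the Yang–Baxter equation. -/
def IsYB {X : Type*} (S : X × X → X × X) : Prop :=
  Function.Bijective S ∧
    onSnd S ∘ onFst S ∘ onSnd S = onFst S ∘ onSnd S ∘ onFst S

/-- Biquandle: a left and right invertible YB solution together with a bijection
`s : X → X` parametrizing the fixed points of `S`. -/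
def IsBiquandle {X : Type*} (S : X × X → X × X) : Prop :=
  IsYB S ∧ LeftInvertible S ∧ RightInvertible S ∧
    ∃ s : X → X, Function.Bijective s ∧ ∀ x y : X, S (x, y) = (x, y) ↔ y = s x

/-- `(X, S, τ)` is a singular pair. -/
def IsSingularPair {X : Type*} (S τ : X × X → X × X) : Prop :=
  IsBiquandle S ∧ Function.Bijective τ ∧ LeftInvertible τ ∧ RightInvertible τ ∧
    τ ∘ S = S ∘ τ ∧
    onFst S ∘ onSnd S ∘ onFst τ = onSnd τ ∘ onFst S ∘ onSnd S ∧
    onSnd S ∘ onFst S ∘ onSnd τ = onFst τ ∘ onSnd S ∘ onFst S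

/-- The bialexander switch `S_{s,t}(x,y) = (s•y, t•x + (1 - s*t)•y)`. -/
def bialexander {R : Type*} [CommRing R] {X : Type*} [AddCommGroup X] [Module R X]
    (s t : R) : X × X → X × X :=
  fun p => (s • p.2, t • p.1 + (1 - s * t) • p.2)

section Aux

variable {R : Type*} [CommRing R] {X : Type*} [AddCommGroup X] [Module R X]

private lemma usmul (u : Rˣ) (x : X) : (u : R) • (((u⁻¹ : Rˣ) : R) • x) = x := by
  rw [smul_smul, Units.mul_inv, one_smul]

private lemma uinv (u : Rˣ) (x : X) : ((u⁻¹ : Rˣ) : R) • ((u : R) • x) = x := by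
  rw [smul_smul, Units.inv_mul, one_smul]

private lemma ucancel (u : Rˣ) {p q : X} (h : (u : R) • p = (u : R) • q) : p = q := by
  have h2 := congrArg (fun w : X => ((u⁻¹ : Rˣ) : R) • w) h
  simpa only [uinv] using h2

/-- normal-form data for `τ`: the value on `(s•a, b)` is determined by `f(u) = τ¹(0,u)`,
and `f` is homogeneous for `s`, `t` and `-1`. -/
private def NF4 (s t : Rˣ) (τ : X × X → X × X) : Prop :=
  (∀ a b : X, τ ((s : R) • a, b)
      = ((s : R) • a + (τ (0, b - a)).1, b - (t : R) • (τ (0, b - a)).1)) ∧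
  (∀ v : X, (τ (0, (s : R) • v)).1 = (s : R) • (τ (0, v)).1) ∧
  (∀ v : X, (τ (0, (t : R) • v)).1 = (t : R) • (τ (0, v)).1) ∧
  (∀ v : X, (τ (0, -v)).1 = -(τ (0, v)).1)

private lemma bialex_biquandle (s t : Rˣ) :
    IsBiquandle (bialexander (X := X) (s : R) (t : R)) := by
  refine ⟨⟨?_, ?_⟩, ?_, ?_, ⟨fun x => ((s⁻¹ : Rˣ) : R) • x, ?_, ?_⟩⟩
  · -- bijective
    refine Function.bijective_iff_has_inverse.mpr
      ⟨fun p => (((t⁻¹ : Rˣ) : R) • (p.2 - (1 - (s : R) * (t : R)) • (((s⁻¹ : Rˣ) : R) • p.1)),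
        ((s⁻¹ : Rˣ) : R) • p.1), ?_, ?_⟩
    · rintro ⟨x, y⟩
      simp only [bialexander, uinv, Prod.mk.injEq]
      refine ⟨?_, trivial⟩
      have h : (t : R) • x + (1 - (s : R) * (t : R)) • y - (1 - (s : R) * (t : R)) • y
          = (t : R) • x := by module
      rw [h, uinv]
    · rintro ⟨x, y⟩
      simp only [bialexander, usmul, Prod.mk.injEq]
      refine ⟨trivial, by abel⟩
  · -- YB
    funext p
    obtain ⟨x, y, z⟩ := p
    simp only [Function.comp_apply, onFst, onSnd, bialexander, Prod.mk.injEq]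
    and_intros <;> first | trivial | module
  · -- left invertible
    intro x z
    refine ⟨((s⁻¹ : Rˣ) : R) • z, ?_, ?_⟩
    · simp only [bialexander, usmul]
    · intro y hy
      simp only [bialexander] at hy
      rw [← hy, uinv]
  · -- right invertible
    intro y w
    refine ⟨((t⁻¹ : Rˣ) : R) • (w - (1 - (s : R) * (t : R)) • y), ?_, ?_⟩
    · simp only [bialexander, usmul]
      abel
    · intro x hx
      simp only [bialexander] at hx
      have : (t : R) • x = w - (1 - (s : R) * (t : R)) • y := by
        rw [← hx]; abel
      rw [← this, uinv]
  · -- bijective fixed-point map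
    exact Function.bijective_iff_has_inverse.mpr
      ⟨fun x => (s : R) • x, fun x => usmul s x, fun x => uinv s x⟩
  · -- fixed points
    intro x y
    constructor
    · intro h
      have h1 : (s : R) • y = x := congrArg Prod.fst h
      show y = ((s⁻¹ : Rˣ) : R) • x
      rw [← h1, uinv]
    · intro h
      subst h
      have key : ∀ w : X, (t : R) • ((s : R) • w) + (1 - (s : R) * (t : R)) • w = w := by
        intro w; module
      refine Prod.ext ?_ ?_
      · exact usmul s x
      · show (t : R) • x + (1 - (s : R) * (t : R)) • (((s⁻¹ : Rˣ) : R) • x)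
          = ((s⁻¹ : Rˣ) : R) • x
        calc (t : R) • x + (1 - (s : R) * (t : R)) • (((s⁻¹ : Rˣ) : R) • x)
            = (t : R) • ((s : R) • (((s⁻¹ : Rˣ) : R) • x))
              + (1 - (s : R) * (t : R)) • (((s⁻¹ : Rˣ) : R) • x) := by rw [usmul]
          _ = ((s⁻¹ : Rˣ) : R) • x := key _

private lemma spair_nf (s t : Rˣ) (hst : IsUnit (1 - (s : R) * (t : R)))
    {τ : X × X → X × X}
    (h : IsSingularPair (bialexander (s : R) (t : R)) τ) : NF4 s t τ := by
  obtain ⟨-, -, -, -, h1, h2, h3⟩ := h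
  -- the key consequence of equation (2)
  have E2 : ∀ x y z : X,
      τ ((t : R) • x + (1 - (s : R) * (t : R)) • ((s : R) • z),
         (t : R) • y + (1 - (s : R) * (t : R)) • z)
      = ((t : R) • (τ (x, y)).1 + (1 - (s : R) * (t : R)) • ((s : R) • z),
         (t : R) • (τ (x, y)).2 + (1 - (s : R) * (t : R)) • z) := by
    intro x y z
    exact (congrArg Prod.snd (congrFun h2 (x, y, z))).symm
  -- t-homogeneity of τ
  have ht : ∀ x y : X, τ ((t : R) • x, (t : R) • y) = (t : R) • τ (x, y) := by
    intro x y
    have h0 := E2 x y 0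
    simp only [smul_zero, add_zero] at h0
    rw [h0]
    rfl
  -- translation equivariance
  obtain ⟨e, he⟩ := hst
  have htr : ∀ u v w : X, τ (u + (s : R) • w, v + w) = τ (u, v) + ((s : R) • w, w) := by
    intro u v w
    have hτ := ht (((t⁻¹ : Rˣ) : R) • u) (((t⁻¹ : Rˣ) : R) • v)
    rw [usmul, usmul] at hτ
    have h0 := E2 (((t⁻¹ : Rˣ) : R) • u) (((t⁻¹ : Rˣ) : R) • v) (((e⁻¹ : Rˣ) : R) • w)
    have a3 : (1 - (s : R) * (t : R)) • ((s : R) • (((e⁻¹ : Rˣ) : R) • w)) = (s : R) • w := by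
      rw [smul_comm, ← he, usmul]
    have a4 : (1 - (s : R) * (t : R)) • (((e⁻¹ : Rˣ) : R) • w) = w := by
      rw [← he, usmul]
    rw [a3, a4, usmul, usmul] at h0
    rw [h0, hτ]
    rfl
  -- s-homogeneity of τ
  have hs : ∀ y z : X, τ ((s : R) • y, (s : R) • z) = (s : R) • τ (y, z) := by
    intro y z
    have ha : (s : R) • (τ (y, z)).1 = (τ ((s : R) • y, (s : R) • z)).1 :=
      congrArg Prod.fst (congrFun h3 ((0 : X), (y, z)))
    have hb : (s : R) • (τ (y, z)).2 = (τ ((s : R) • y, (s : R) • z)).2 :=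
      congrArg (fun p : X × X × X => p.2.1) (congrFun h3 ((0 : X), (y, z)))
    exact (Prod.ext ha hb).symm
  -- the linear constraint t•τ¹ + τ² = t•y + z
  have hc : ∀ y z : X, (t : R) • (τ (y, z)).1 + (τ (y, z)).2 = (t : R) • y + z := by
    intro y z
    have h0 : (t : R) • ((t : R) • (0 : X) + (1 - (s : R) * (t : R)) • (τ (y, z)).1)
        + (1 - (s : R) * (t : R)) • (τ (y, z)).2
        = (t : R) • ((t : R) • (0 : X) + (1 - (s : R) * (t : R)) • y)
        + (1 - (s : R) * (t : R)) • z :=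
      congrArg (fun p : X × X × X => p.2.2) (congrFun h3 ((0 : X), (y, z)))
    have key : ∀ p q : X, (t : R) • ((t : R) • (0 : X) + (1 - (s : R) * (t : R)) • p)
        + (1 - (s : R) * (t : R)) • q
        = (1 - (s : R) * (t : R)) • ((t : R) • p + q) := by
      intro p q; module
    rw [key, key, ← he] at h0
    exact ucancel e h0
  -- second component of τ (0, u)
  have tfB : ∀ u : X, (τ (0, u)).2 = u - (t : R) • (τ (0, u)).1 := by
    intro u
    have h0 := hc 0 u
    rw [smul_zero, zero_add] at h0
    exact eq_sub_of_add_eq' h0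
  -- the normal form
  have NF : ∀ a b : X, τ ((s : R) • a, b)
      = ((s : R) • a + (τ (0, b - a)).1, b - (t : R) • (τ (0, b - a)).1) := by
    intro a b
    have h0 := htr 0 (b - a) a
    rw [zero_add, sub_add_cancel] at h0
    rw [h0]
    refine Prod.ext ?_ ?_
    · show (τ (0, b - a)).1 + (s : R) • a = (s : R) • a + (τ (0, b - a)).1
      abel
    · show (τ (0, b - a)).2 + a = b - (t : R) • (τ (0, b - a)).1
      rw [tfB (b - a)]
      abel
  have fs : ∀ v : X, (τ (0, (s : R) • v)).1 = (s : R) • (τ (0, v)).1 := by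
    intro v
    have h0 := hs 0 v
    rw [smul_zero] at h0
    exact congrArg Prod.fst h0
  have ft : ∀ v : X, (τ (0, (t : R) • v)).1 = (t : R) • (τ (0, v)).1 := by
    intro v
    have h0 := ht 0 v
    rw [smul_zero] at h0
    exact congrArg Prod.fst h0
  refine ⟨NF, fs, ft, ?_⟩
  -- oddness, from equation (1)
  intro v
  have h0 : (τ ((s : R) • v, (t : R) • (0 : X) + (1 - (s : R) * (t : R)) • v)).1
      = (s : R) • (τ (0, v)).2 :=
    congrArg Prod.fst (congrFun h1 ((0 : X), v))
  rw [smul_zero, zero_add] at h0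
  rw [NF v ((1 - (s : R) * (t : R)) • v)] at h0
  have harg : (1 - (s : R) * (t : R)) • v - v = (s : R) • ((t : R) • (-v)) := by module
  rw [harg, fs, ft, tfB v] at h0
  have h0' : (s : R) • v + (s : R) • ((t : R) • (τ (0, -v)).1)
      = (s : R) • (v - (t : R) • (τ (0, v)).1) := h0
  have hx : (s : R) • ((t : R) • (τ (0, -v)).1) = (s : R) • ((t : R) • (-(τ (0, v)).1)) := by
    linear_combination (norm := module) h0'
  exact ucancel t (ucancel s hx)

private lemma nf_spair (s t : Rˣ) {τ : X × X → X × X}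
    (hbij : Function.Bijective τ) (hl : LeftInvertible τ) (hr : RightInvertible τ)
    (h : NF4 s t τ) : IsSingularPair (bialexander (s : R) (t : R)) τ := by
  obtain ⟨NF, fs, ft, fneg⟩ := h
  refine ⟨bialex_biquandle s t, hbij, hl, hr, ?_, ?_, ?_⟩
  · -- equation (1)
    funext p
    obtain ⟨x, y⟩ := p
    obtain ⟨a, rfl⟩ : ∃ a, x = (s : R) • a := ⟨((s⁻¹ : Rˣ) : R) • x, (usmul s x).symm⟩
    simp only [Function.comp_apply, bialexander]
    rw [NF a y, NF y ((t : R) • ((s : R) • a) + (1 - (s : R) * (t : R)) • y)]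
    have harg : (t : R) • ((s : R) • a) + (1 - (s : R) * (t : R)) • y - y
        = (s : R) • ((t : R) • (-(y - a))) := by module
    rw [harg, fs, ft, fneg]
    simp only [Prod.mk.injEq]
    constructor <;> module
  · -- equation (2)
    funext p
    obtain ⟨x, y, z⟩ := p
    obtain ⟨a, rfl⟩ : ∃ a, x = (s : R) • a := ⟨((s⁻¹ : Rˣ) : R) • x, (usmul s x).symm⟩
    simp only [Function.comp_apply, onFst, onSnd, bialexander]
    rw [NF a y]
    have h1 : (t : R) • ((s : R) • a) + (1 - (s : R) * (t : R)) • ((s : R) • z)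
        = (s : R) • ((t : R) • a + (1 - (s : R) * (t : R)) • z) := by module
    rw [h1, NF ((t : R) • a + (1 - (s : R) * (t : R)) • z)
      ((t : R) • y + (1 - (s : R) * (t : R)) • z)]
    have h2 : (t : R) • y + (1 - (s : R) * (t : R)) • z
        - ((t : R) • a + (1 - (s : R) * (t : R)) • z) = (t : R) • (y - a) := by module
    rw [h2, ft]
    simp only [Prod.mk.injEq]
    and_intros <;> first | trivial | module
  · -- equation (3)
    funext p
    obtain ⟨x, y, z⟩ := p
    obtain ⟨b, rfl⟩ : ∃ b, y = (s : R) • b := ⟨((s⁻¹ : Rˣ) : R) • y, (usmul s y).symm⟩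
    simp only [Function.comp_apply, onFst, onSnd, bialexander]
    rw [NF b z, NF ((s : R) • b) ((s : R) • z)]
    have h1 : (s : R) • z - (s : R) • b = (s : R) • (z - b) := by module
    rw [h1, fs]
    simp only [Prod.mk.injEq]
    and_intros <;> first | trivial | module

private lemma six_of_nf (s t : Rˣ) {τ : X × X → X × X} (h : NF4 s t τ) :
    ((∀ x y : X, τ ((s : R) • x, (s : R) • y) = (s : R) • τ (x, y)) ∧
     (∀ x y : X, τ ((t : R) • x, (t : R) • y) = (t : R) • τ (x, y)) ∧
     (∀ x y : X, τ ((-1 : R) • x, (-1 : R) • y) = (-1 : R) • τ (x, y)) ∧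
     (∀ x y : X, τ (x, y) = τ (0, y - ((s⁻¹ : Rˣ) : R) • x) + (x, ((s⁻¹ : Rˣ) : R) • x)) ∧
     (∀ x y : X, τ (x, y) = τ (x - (s : R) • y, 0) + ((s : R) • y, y)) ∧
     (∀ x : X, (t : R) • (τ (0, x)).1 = (s : R) • (τ (x, 0)).2)) := by
  obtain ⟨NF, fs, ft, fneg⟩ := h
  have NF0 : ∀ b : X, τ (0, b) = ((τ (0, b)).1, b - (t : R) • (τ (0, b)).1) := by
    intro b
    have h0 := NF 0 b
    rw [smul_zero, sub_zero] at h0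
    rw [h0]
    simp only [Prod.mk.injEq]
    and_intros <;> first | trivial | module
  refine ⟨?_, ?_, ?_, ?_, ?_, ?_⟩
  · -- s-homogeneity
    intro x y
    obtain ⟨a, rfl⟩ : ∃ a, x = (s : R) • a := ⟨((s⁻¹ : Rˣ) : R) • x, (usmul s x).symm⟩
    rw [NF a y]
    have h1 : (s : R) • ((s : R) • a) = (s : R) • ((s : R) • a) := rfl
    rw [NF ((s : R) • a) ((s : R) • y)]
    have h2 : (s : R) • y - (s : R) • a = (s : R) • (y - a) := by module
    rw [h2, fs]
    simp only [Prod.smul_mk, Prod.mk.injEq]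
    constructor <;> module
  · -- t-homogeneity
    intro x y
    obtain ⟨a, rfl⟩ : ∃ a, x = (s : R) • a := ⟨((s⁻¹ : Rˣ) : R) • x, (usmul s x).symm⟩
    rw [NF a y]
    have h1 : (t : R) • ((s : R) • a) = (s : R) • ((t : R) • a) := by module
    rw [h1, NF ((t : R) • a) ((t : R) • y)]
    have h2 : (t : R) • y - (t : R) • a = (t : R) • (y - a) := by module
    rw [h2, ft]
    simp only [Prod.smul_mk, Prod.mk.injEq]
    constructor <;> module
  · -- (-1)-homogeneity
    intro x y
    obtain ⟨a, rfl⟩ : ∃ a, x = (s : R) • a := ⟨((s⁻¹ : Rˣ) : R) • x, (usmul s x).symm⟩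
    rw [NF a y]
    have h1 : (-1 : R) • ((s : R) • a) = (s : R) • (-a) := by module
    have h1' : (-1 : R) • y = -y := by module
    rw [h1, h1', NF (-a) (-y)]
    have h2 : -y - -a = -(y - a) := by module
    rw [h2, fneg]
    simp only [Prod.smul_mk, Prod.mk.injEq]
    constructor <;> module
  · -- condition (ii)
    intro x y
    obtain ⟨a, rfl⟩ : ∃ a, x = (s : R) • a := ⟨((s⁻¹ : Rˣ) : R) • x, (usmul s x).symm⟩
    rw [NF a y, uinv s a, NF0 (y - a)]
    simp only [Prod.mk_add_mk, Prod.mk.injEq]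
    constructor <;> module
  · -- condition (iii)
    intro x y
    obtain ⟨a, rfl⟩ : ∃ a, x = (s : R) • a := ⟨((s⁻¹ : Rˣ) : R) • x, (usmul s x).symm⟩
    rw [NF a y]
    have h1 : (s : R) • a - (s : R) • y = (s : R) • (a - y) := by module
    rw [h1, NF (a - y) 0]
    have h2 : (0 : X) - (a - y) = y - a := by module
    rw [h2]
    simp only [Prod.mk_add_mk, Prod.mk.injEq]
    constructor <;> module
  · -- condition (iv)
    intro x
    obtain ⟨a, rfl⟩ : ∃ a, x = (s : R) • a := ⟨((s⁻¹ : Rˣ) : R) • x, (usmul s x).symm⟩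
    rw [fs, NF a 0]
    have h2 : (0 : X) - a = -a := by module
    show (t : R) • ((s : R) • (τ (0, a)).1)
        = (s : R) • ((0 : X) - (t : R) • (τ (0, (0 : X) - a)).1)
    rw [h2, fneg]
    module

private lemma nf_of_six (s t : Rˣ) {τ : X × X → X × X}
    (h : ((∀ x y : X, τ ((s : R) • x, (s : R) • y) = (s : R) • τ (x, y)) ∧
     (∀ x y : X, τ ((t : R) • x, (t : R) • y) = (t : R) • τ (x, y)) ∧
     (∀ x y : X, τ ((-1 : R) • x, (-1 : R) • y) = (-1 : R) • τ (x, y)) ∧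
     (∀ x y : X, τ (x, y) = τ (0, y - ((s⁻¹ : Rˣ) : R) • x) + (x, ((s⁻¹ : Rˣ) : R) • x)) ∧
     (∀ x y : X, τ (x, y) = τ (x - (s : R) • y, 0) + ((s : R) • y, y)) ∧
     (∀ x : X, (t : R) • (τ (0, x)).1 = (s : R) • (τ (x, 0)).2))) : NF4 s t τ := by
  obtain ⟨hS, hT, hN, hii, hiii, hiv⟩ := h
  have fs : ∀ v : X, (τ (0, (s : R) • v)).1 = (s : R) • (τ (0, v)).1 := by
    intro v
    have h0 := hS 0 v
    rw [smul_zero] at h0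
    exact congrArg Prod.fst h0
  have ft : ∀ v : X, (τ (0, (t : R) • v)).1 = (t : R) • (τ (0, v)).1 := by
    intro v
    have h0 := hT 0 v
    rw [smul_zero] at h0
    exact congrArg Prod.fst h0
  have fneg : ∀ v : X, (τ (0, -v)).1 = -(τ (0, v)).1 := by
    intro v
    have h0 := hN 0 v
    rw [smul_zero, neg_one_smul, neg_one_smul] at h0
    have := congrArg Prod.fst h0
    simpa using this
  -- second component of τ (0, u)
  have tfB : ∀ u : X, (τ (0, u)).2 = u - (t : R) • (τ (0, u)).1 := by
    intro u
    have h0 := hiii 0 u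
    have hA : τ ((0 : X) - (s : R) • u, 0) = -τ ((s : R) • u, 0) := by
      have h1 := hN ((s : R) • u) 0
      rw [smul_zero, neg_one_smul] at h1
      rw [zero_sub, h1]
      module
    have hB : τ ((s : R) • u, (0 : X)) = (s : R) • τ (u, 0) := by
      have h1 := hS u 0
      rwa [smul_zero] at h1
    rw [hA, hB] at h0
    have h2 : (τ (0, u)).2 = (-((s : R) • τ (u, 0)) + ((s : R) • u, u)).2 :=
      congrArg Prod.snd h0
    have h3 : (τ (0, u)).2 = -((s : R) • (τ (u, 0)).2) + u := h2
    rw [h3, ← hiv u]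
    module
  refine ⟨?_, fs, ft, fneg⟩
  intro a b
  have h0 := hii ((s : R) • a) b
  rw [uinv s a] at h0
  rw [h0]
  have h4 : τ (0, b - a) = ((τ (0, b - a)).1, b - a - (t : R) • (τ (0, b - a)).1) := by
    refine Prod.ext rfl ?_
    exact tfB (b - a)
  rw [h4]
  simp only [Prod.mk_add_mk, Prod.mk.injEq]
  constructor <;> module

end Aux

/-- characterization of singular pairs for the bialexander switch,
assuming `s`, `t` and `1 - s*t` are units; moreover `τ` is fully determined by
the values `τ¹(0,x)`. -/
theorem singularPair_bialexander_iff {R : Type*} [CommRing R]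
    {X : Type*} [AddCommGroup X] [Module R X]
    (s t : Rˣ) (hst : IsUnit (1 - (s : R) * (t : R)))
    (τ : X × X → X × X) (hτbij : Function.Bijective τ)
    (hτl : LeftInvertible τ) (hτr : RightInvertible τ) :
    (IsSingularPair (bialexander (s : R) (t : R)) τ ↔
      ((∀ x y : X, τ ((s : R) • x, (s : R) • y) = (s : R) • τ (x, y)) ∧
       (∀ x y : X, τ ((t : R) • x, (t : R) • y) = (t : R) • τ (x, y)) ∧
       (∀ x y : X, τ ((-1 : R) • x, (-1 : R) • y) = (-1 : R) • τ (x, y)) ∧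
       (∀ x y : X, τ (x, y) = τ (0, y - ((s⁻¹ : Rˣ) : R) • x) + (x, ((s⁻¹ : Rˣ) : R) • x)) ∧
       (∀ x y : X, τ (x, y) = τ (x - (s : R) • y, 0) + ((s : R) • y, y)) ∧
       (∀ x : X, (t : R) • (τ (0, x)).1 = (s : R) • (τ (x, 0)).2))) ∧
    (∀ τ' : X × X → X × X, Function.Bijective τ' → LeftInvertible τ' → RightInvertible τ' →
      IsSingularPair (bialexander (s : R) (t : R)) τ →
      IsSingularPair (bialexander (s : R) (t : R)) τ' →
      (∀ x : X, (τ' (0, x)).1 = (τ (0, x)).1) → τ' = τ) := by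
  constructor
  · constructor
    · intro hsp
      exact six_of_nf s t (spair_nf s t hst hsp)
    · intro h6
      exact nf_spair s t hτbij hτl hτr (nf_of_six s t h6)
  · intro τ' hbij' hl' hr' hτsp hτ'sp hfst
    have N := spair_nf s t hst hτsp
    have N' := spair_nf s t hst hτ'sp
    funext p
    obtain ⟨x, y⟩ := p
    obtain ⟨a, rfl⟩ : ∃ a, x = (s : R) • a := ⟨((s⁻¹ : Rˣ) : R) • x, (usmul s x).symm⟩
    rw [N'.1 a y, N.1 a y, hfst (y - a)]

end Paper
end

section
/- Let R be a commutative ring, let X be an R-module, and let s, t be invertible elements of R. Let φ : X → X be a bijection satisfying φ(λx) = λ·φ(x) for λ ∈ {s, t, −1} and all x ∈ X, and define τ_φ(x,y) = (x + φ(sy − x), y − t·φ(sy − x)). If τ_φ is a bijection of X×X, then (X, S_{s,t}, τ_φ) is a singular pair. -/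
namespace Paper

section Aux
variable {R : Type*} [CommRing R] {X : Type*} [AddCommGroup X] [Module R X]

lemma unit_cancel (u : Rˣ) (x : X) : (↑u⁻¹ : R) • ((u : R) • x) = x := by
  rw [smul_smul, Units.inv_mul, one_smul]

lemma unit_cancel' (u : Rˣ) (x : X) : (u : R) • ((↑u⁻¹ : R) • x) = x := by
  rw [smul_smul, Units.mul_inv, one_smul]

lemma unit_smul_inj (u : Rˣ) {x y : X} (h : (u : R) • x = (u : R) • y) : x = y := by
  have := congrArg (fun w : X => (↑u⁻¹ : R) • w) h
  simpa [unit_cancel] using this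

lemma biq_bialexander (s t : Rˣ) :
    IsBiquandle (bialexander (s : R) (t : R) : X × X → X × X) := by
  refine ⟨⟨?_, ?_⟩, ?_, ?_, ?_⟩
  · -- bijective
    constructor
    · rintro ⟨x, y⟩ ⟨x', y'⟩ h
      simp only [bialexander, Prod.mk.injEq] at h
      obtain ⟨h1, h2⟩ := h
      have hy : y = y' := unit_smul_inj s h1
      subst hy
      exact Prod.ext (unit_smul_inj t (add_right_cancel h2)) rfl
    · rintro ⟨a, b⟩
      refine ⟨((↑t⁻¹ : R) • (b - (1 - (s : R) * (t : R)) • ((↑s⁻¹ : R) • a)),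
        (↑s⁻¹ : R) • a), ?_⟩
      simp only [bialexander, Prod.mk.injEq]
      constructor
      · exact unit_cancel' s a
      · rw [unit_cancel' t]
        abel
  · -- YB equation
    funext p
    obtain ⟨x, y, z⟩ := p
    simp only [onFst, onSnd, bialexander, Function.comp_apply, Prod.mk.injEq, and_true,
      true_and]
    first
    | (refine ⟨?_, ?_, ?_⟩ <;> module)
    | (refine ⟨?_, ?_⟩ <;> module)
    | module
  · -- left invertible
    intro x z
    refine ⟨(↑s⁻¹ : R) • z, ?_, ?_⟩
    · simpa [bialexander] using unit_cancel' s z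
    · intro y hy
      simp only [bialexander] at hy
      rw [← hy, unit_cancel]
  · -- right invertible
    intro y w
    refine ⟨(↑t⁻¹ : R) • (w - (1 - (s : R) * (t : R)) • y), ?_, ?_⟩
    · simp only [bialexander]
      rw [unit_cancel' t]
      abel
    · intro x hx
      simp only [bialexander] at hx
      have : (t : R) • x = w - (1 - (s : R) * (t : R)) • y := by
        rw [← hx]; abel
      rw [← this, unit_cancel]
  · -- fixed points
    refine ⟨fun x => (↑s⁻¹ : R) • x, ⟨fun a b h => ?_, fun b => ⟨(s : R) • b, unit_cancel s b⟩⟩, ?_⟩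
    · have := congrArg (fun w : X => (s : R) • w) h
      simpa [unit_cancel'] using this
    · intro x y
      simp only [bialexander, Prod.mk.injEq]
      constructor
      · rintro ⟨h1, -⟩
        rw [← h1, unit_cancel]
      · intro hy
        subst hy
        refine ⟨unit_cancel' s x, ?_⟩
        match_scalars <;> linear_combination (-(t : R)) * s.mul_inv

end Aux

/-- if `φ` is a bijection commuting with multiplication by `s`, `t`, `-1`,
and `τ_φ(x,y) = (x + φ(s•y - x), y - t•φ(s•y - x))` is bijective, then
`(X, S_{s,t}, τ_φ)` is a singular pair. -/
theorem singularPair_of_tauPhi {R : Type*} [CommRing R]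
    {X : Type*} [AddCommGroup X] [Module R X]
    (s t : Rˣ) (φ : X → X) (hφ : Function.Bijective φ)
    (hφs : ∀ x : X, φ ((s : R) • x) = (s : R) • φ x)
    (hφt : ∀ x : X, φ ((t : R) • x) = (t : R) • φ x)
    (hφneg : ∀ x : X, φ ((-1 : R) • x) = (-1 : R) • φ x)
    (hbij : Function.Bijective
      (fun p : X × X => (p.1 + φ ((s : R) • p.2 - p.1), p.2 - (t : R) • φ ((s : R) • p.2 - p.1)))) :
    IsSingularPair (bialexander (s : R) (t : R))
      (fun p : X × X =>
        (p.1 + φ ((s : R) • p.2 - p.1), p.2 - (t : R) • φ ((s : R) • p.2 - p.1))) := by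
  obtain ⟨ψ, hψ1, hψ2⟩ := Function.bijective_iff_has_inverse.1 hφ
  have hφneg' : ∀ x : X, φ (-x) = -φ x := by
    intro x
    have := hφneg x
    simpa using this
  have hφst : ∀ x : X, φ (((s : R) * (t : R)) • x) = ((s : R) * (t : R)) • φ x := by
    intro x
    rw [mul_smul, hφs, hφt, mul_smul]
  refine ⟨biq_bialexander s t, hbij, ?_, ?_, ?_, ?_, ?_⟩
  · -- left invertible τ
    intro x z
    refine ⟨(↑s⁻¹ : R) • (ψ (z - x) + x), ?_, ?_⟩
    · simp only
      rw [unit_cancel' s, add_sub_cancel_right, hψ2, add_sub_cancel]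
    · intro y hy
      simp only at hy
      have h1 : φ ((s : R) • y - x) = z - x := by rw [← hy]; abel
      have h2 : (s : R) • y - x = ψ (z - x) := by rw [← h1, hψ1]
      have h3 : (s : R) • y = ψ (z - x) + x := by rw [← h2]; abel
      rw [← h3, unit_cancel]
  · -- right invertible τ
    intro y w
    refine ⟨(s : R) • y - ψ ((↑t⁻¹ : R) • (y - w)), ?_, ?_⟩
    · simp only
      rw [sub_sub_cancel, hψ2, unit_cancel' t, sub_sub_cancel]
    · intro x hx
      simp only at hx
      have h1 : (t : R) • φ ((s : R) • y - x) = y - w := by rw [← hx]; abel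
      have h2 : φ ((s : R) • y - x) = (↑t⁻¹ : R) • (y - w) := by
        rw [← h1, unit_cancel]
      have h3 : (s : R) • y - x = ψ ((↑t⁻¹ : R) • (y - w)) := by rw [← h2, hψ1]
      rw [← h3]; abel
  · -- τ ∘ S = S ∘ τ
    funext p
    obtain ⟨x, y⟩ := p
    simp only [Function.comp_apply, bialexander, Prod.mk.injEq]
    have harg : (s : R) • ((t : R) • x + (1 - (s : R) * (t : R)) • y) - (s : R) • y
        = -(((s : R) * (t : R)) • ((s : R) • y - x)) := by module
    rw [harg, hφneg', hφst]
    constructor <;> module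
  · -- equation (2)
    funext p
    obtain ⟨x, y, z⟩ := p
    simp only [onFst, onSnd, bialexander, Function.comp_apply, Prod.mk.injEq]
    have harg : (s : R) • ((t : R) • y + (1 - (s : R) * (t : R)) • z)
        - ((t : R) • x + (1 - (s : R) * (t : R)) • ((s : R) • z))
        = (t : R) • ((s : R) • y - x) := by module
    rw [harg, hφt]
    try simp only [true_and, and_true, eq_self_iff_true]
    first
    | (refine ⟨?_, ?_, ?_⟩ <;> module)
    | (refine ⟨?_, ?_⟩ <;> module)
    | module
  · -- equation (3)
    funext p
    obtain ⟨x, y, z⟩ := p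
    simp only [onFst, onSnd, bialexander, Function.comp_apply, Prod.mk.injEq]
    have harg : (s : R) • ((s : R) • z) - (s : R) • y = (s : R) • ((s : R) • z - y) := by
      module
    rw [harg, hφs]
    try simp only [true_and, and_true, eq_self_iff_true]
    first
    | (refine ⟨?_, ?_, ?_⟩ <;> module)
    | (refine ⟨?_, ?_⟩ <;> module)
    | module

end Paper
end

section
/- Let R be a commutative ring, let X be an R-module, and let s, t and 1−st be invertible elements of R. If τ : X×X → X×X is a bijection, left and right invertible, such that (X, S_{s,t}, τ) is a singular pair, then the map φ : X → X defined by φ(x) = s⁻¹·τ¹(0,x) is a bijection satisfying φ(λx) = λ·φ(x) for λ ∈ {s, t, −1}, and τ(x,y) = (x + φ(sy − x), y − t·φ(sy − x)) for all x,y ∈ X. -/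
namespace Paper

/-- conversely, any singular pair for the bialexander switch (with
`s`, `t`, `1 - s*t` units) comes from a bijection `φ(x) = s⁻¹ • τ¹(0,x)` commuting
with multiplication by `s`, `t`, `-1`, via `τ(x,y) = (x + φ(s•y - x), y - t•φ(s•y - x))`. -/
theorem tauPhi_of_singularPair {R : Type*} [CommRing R]
    {X : Type*} [AddCommGroup X] [Module R X]
    (s t : Rˣ) (hst : IsUnit (1 - (s : R) * (t : R)))
    (τ : X × X → X × X)
    (hτ : IsSingularPair (bialexander (s : R) (t : R)) τ) :
    let φ : X → X := fun x => ((s⁻¹ : Rˣ) : R) • (τ (0, x)).1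
    Function.Bijective φ ∧
      (∀ x : X, φ ((s : R) • x) = (s : R) • φ x) ∧
      (∀ x : X, φ ((t : R) • x) = (t : R) • φ x) ∧
      (∀ x : X, φ ((-1 : R) • x) = (-1 : R) • φ x) ∧
      (∀ x y : X,
        τ (x, y) = (x + φ ((s : R) • y - x), y - (t : R) • φ ((s : R) • y - x))) := by
  obtain ⟨-, hbij, hLI, -, hcomm, hc2, hc3⟩ := hτ
  obtain ⟨cu, hcu⟩ := hst
  intro φ
  have cancel : ∀ (a b : R), a * b = 1 → ∀ u v : X, b • u = b • v → u = v := by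
    intro a b hab u v h
    have h2 := congrArg (a • ·) h
    simpa [smul_smul, hab] using h2
  have hφ : ∀ u : X, φ u = ((s⁻¹ : Rˣ) : R) • (τ (0, u)).1 := fun u => rfl
  have hsφ : ∀ u : X, (s : R) • φ u = (τ (0, u)).1 := by
    intro u
    rw [hφ, smul_smul, Units.mul_inv, one_smul]
  have h1a : ∀ x y : X, (τ ((s:R) • y, (t:R) • x + (1 - (s:R)*(t:R)) • y)).1
      = (s:R) • (τ (x, y)).2 := by
    intro x y
    have h := congrFun hcomm (x, y)
    simp only [Function.comp_apply, bialexander] at h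
    exact congrArg Prod.fst h
  have h3 := fun x y z : X => congrFun hc3 (x, y, z)
  simp only [Function.comp_apply, onFst, onSnd, bialexander, Prod.mk.injEq] at h3
  have h2 := fun x y z : X => congrFun hc2 (x, y, z)
  simp only [Function.comp_apply, onFst, onSnd, bialexander, Prod.mk.injEq] at h2
  have h3a : ∀ y z : X, (τ ((s:R) • y, (s:R) • z)).1 = (s:R) • (τ (y, z)).1 :=
    fun y z => ((h3 0 y z).1).symm
  have hc1 : ((cu⁻¹ : Rˣ) : R) * (1 - (s:R)*(t:R)) = 1 := by
    rw [← hcu]; exact cu.inv_mul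
  have hc1' : (1 - (s:R)*(t:R)) * ((cu⁻¹ : Rˣ) : R) = 1 := by
    rw [← hcu]; exact cu.mul_inv
  have h3c : ∀ y z : X, (t:R) • (τ (y, z)).1 + (τ (y, z)).2 = (t:R) • y + z := by
    intro y z
    have h := (h3 0 y z).2.2
    simp only [smul_zero, zero_add] at h
    refine cancel _ _ hc1 _ _ ?_
    have e : ∀ u v : X, (1 - (s:R)*(t:R)) • ((t:R) • u + v)
        = (t:R) • ((1 - (s:R)*(t:R)) • u) + (1 - (s:R)*(t:R)) • v := by
      intro u v; module
    rw [e, e]; exact h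
  have h2a : ∀ x y z : X,
      (τ ((t:R) • x + (1 - (s:R)*(t:R)) • (s:R) • z, (t:R) • y + (1 - (s:R)*(t:R)) • z)).1
        = (t:R) • (τ (x, y)).1 + (1 - (s:R)*(t:R)) • (s:R) • z :=
    fun x y z => (congrArg Prod.fst (h2 x y z).2).symm
  have hzero : ∀ x y : X,
      (τ (0, (t:R) • y - ((s⁻¹ : Rˣ) : R) • ((t:R) • x))).1
        = (t:R) • (τ (x, y)).1 - (t:R) • x := by
    intro x y
    have h := h2a x y (-(((s⁻¹ : Rˣ) : R) • ((cu⁻¹ : Rˣ) : R) • ((t:R) • x)))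
    have e1 : (t:R) • x + (1 - (s:R)*(t:R)) • (s:R) •
        (-(((s⁻¹ : Rˣ) : R) • ((cu⁻¹ : Rˣ) : R) • ((t:R) • x))) = (0 : X) := by
      match_scalars
      linear_combination (-(t:R)) * hc1'
        + (-((1 - (s:R)*(t:R)) * ((cu⁻¹ : Rˣ) : R) * (t:R))) * s.mul_inv
    have e2 : (t:R) • y + (1 - (s:R)*(t:R)) •
        (-(((s⁻¹ : Rˣ) : R) • ((cu⁻¹ : Rˣ) : R) • ((t:R) • x)))
        = (t:R) • y - ((s⁻¹ : Rˣ) : R) • ((t:R) • x) := by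
      match_scalars
      · ring
      · linear_combination (-(((s⁻¹ : Rˣ) : R) * (t:R))) * hc1'
    rw [e1, e2] at h
    rw [h]
    match_scalars
    · ring
    · linear_combination (-(t:R)) * hc1'
        + (-((1 - (s:R)*(t:R)) * ((cu⁻¹ : Rˣ) : R) * (t:R))) * s.mul_inv
  have hψt : ∀ y : X, (τ (0, (t:R) • y)).1 = (t:R) • (τ (0, y)).1 := by
    intro y
    have h := hzero 0 y
    simpa using h
  have hψs : ∀ y : X, (τ (0, (s:R) • y)).1 = (s:R) • (τ (0, y)).1 := by
    intro y
    have h := h3a 0 y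
    simpa using h
  have hτ1 : ∀ x y : X, (τ (x, y)).1 = x + φ ((s:R) • y - x) := by
    intro x y
    have h := hzero x y
    have e : (t:R) • y - ((s⁻¹ : Rˣ) : R) • ((t:R) • x)
        = (t:R) • (y - ((s⁻¹ : Rˣ) : R) • x) := by
      match_scalars <;> ring
    rw [e, hψt] at h
    have h2' : (τ (0, y - ((s⁻¹ : Rˣ) : R) • x)).1 = (τ (x, y)).1 - x := by
      refine cancel ((t⁻¹ : Rˣ) : R) ((t:R)) t.inv_mul _ _ ?_
      rw [h, smul_sub]
    have h4 : φ ((s:R) • y - x) = (τ (0, y - ((s⁻¹ : Rˣ) : R) • x)).1 := by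
      have e2 : (s:R) • y - x = (s:R) • (y - ((s⁻¹ : Rˣ) : R) • x) := by
        match_scalars
        · ring
        · linear_combination s.mul_inv
      rw [hφ, e2, hψs, smul_smul, Units.inv_mul, one_smul]
    rw [h4, h2']
    abel
  have hτ2 : ∀ x y : X, (τ (x, y)).2 = y - (t:R) • φ ((s:R) • y - x) := by
    intro x y
    have h := h3c x y
    rw [hτ1 x y] at h
    have hB := eq_sub_of_add_eq' h
    rw [hB]
    match_scalars <;> ring
  have hφs : ∀ u : X, φ ((s:R) • u) = (s:R) • φ u := by
    intro u
    rw [hφ, hφ, hψs, smul_smul, smul_smul, mul_comm]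
  have hφt : ∀ u : X, φ ((t:R) • u) = (t:R) • φ u := by
    intro u
    rw [hφ, hφ, hψt, smul_smul, smul_smul, mul_comm]
  have hneg : ∀ v : X, φ (-v) = -φ v := by
    intro v
    have h := h1a (-v) 0
    simp only [smul_zero, add_zero, zero_add] at h
    rw [hτ2] at h
    rw [← hsφ] at h
    simp only [smul_zero, zero_sub, sub_neg_eq_add, zero_add, smul_neg] at h
    rw [← smul_neg (t:R) v, hφt] at h
    have h1 : (t:R) • φ (-v) = (t:R) • (-φ v) := by
      refine cancel _ _ s.inv_mul _ _ ?_
      rw [h]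
      simp [smul_neg]
    exact cancel _ _ t.inv_mul _ _ h1
  have hφn : ∀ u : X, φ ((-1 : R) • u) = (-1 : R) • φ u := by
    intro u
    rw [neg_one_smul, neg_one_smul, hneg]
  refine ⟨⟨?_, ?_⟩, hφs, hφt, hφn, ?_⟩
  · intro a b hab
    obtain ⟨y₀, hy₀, hu⟩ := hLI 0 ((τ (0, a)).1)
    have ha : a = y₀ := hu a rfl
    have hb : b = y₀ := hu b (show (τ (0, b)).1 = (τ (0, a)).1 by
      rw [← hsφ a, ← hsφ b, hab])
    rw [ha, hb]
  · intro z
    obtain ⟨y₀, hy₀, -⟩ := hLI 0 ((s:R) • z)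
    refine ⟨y₀, ?_⟩
    rw [hφ, hy₀, smul_smul, Units.inv_mul, one_smul]
  · intro x y
    exact Prod.ext (hτ1 x y) (hτ2 x y)


end Paper
end

section
/- Let K be a finite field, let s, t ∈ K be nonzero with t ≠ s⁻¹, and assume that the set {−1, s, t} generates the multiplicative group K^× . Let S = S_{s,t} be the bialexander switch on X = K, and let τ : K×K → K×K be a bijection, left and right invertible, such that (K, S, τ) is a singular pair. Then τ is a K-linear map, and setting a := τ¹(0,1) one has τ¹(0,y) = a·y and τ²(s·x, 0) = a·t·x for all x,y, and τ(x,y) = ( a·y + (1 − a/s)·x , (a·t/s)·x + (1 − a·t)·y ) for all x,y ∈ K. -/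
/-!
Relation (3) of a singular pair, read in its third coordinate, expresses `τ²` through `τ¹`, and in
its first coordinate says that `τ¹` commutes with scaling by `s`. Relation (2) gives
`τ¹(u + s c, v + c) = τ¹(u, v) + s c` (this needs `1 - s t ≠ 0`) and commutation with scaling by
`t`; hence `τ¹(x, y) = φ(x - s y) + s y` with `φ w = τ¹(w, 0)`. Relation (1), `τ S = S τ`, then
makes `φ` odd. So `φ (u w) = u φ w` for `u ∈ {-1, s, t}`, hence for every unit since these
generate `Kˣ`, and `φ` is multiplication by `φ 1`.
-/

namespace Paper

theorem isLinearMap_of_apply_eq {R : Type*} [CommSemiring R] {f : R × R → R × R} {α β γ δ : R}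
    (h : ∀ x y, f (x, y) = (α * x + β * y, γ * x + δ * y)) : IsLinearMap R f := by
  refine ⟨fun ⟨x, y⟩ ⟨x', y'⟩ => ?_, fun c ⟨x, y⟩ => ?_⟩
  · rw [Prod.mk_add_mk, h, h, h, Prod.mk_add_mk]
    exact Prod.ext (by ring) (by ring)
  · rw [Prod.smul_mk, h, h, Prod.smul_mk, smul_eq_mul, smul_eq_mul]
    exact Prod.ext (by ring) (by ring)

section CommRing

variable {K : Type*} [CommRing K] {s t : K} {τ : K × K → K × K}

theorem fst_apply_bialexander_of_comm (h : τ ∘ bialexander (X := K) s t = bialexander s t ∘ τ)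
    (x y : K) : (τ (s * y, t * x + (1 - s * t) * y)).1 = s * (τ (x, y)).2 := by
  simpa [bialexander] using congrArg Prod.fst (congrFun h (x, y))

theorem fst_apply_of_braid_left
    (h : onFst (bialexander (X := K) s t) ∘ onSnd (bialexander s t) ∘ onFst τ
      = onSnd τ ∘ onFst (bialexander s t) ∘ onSnd (bialexander s t)) (x y z : K) :
    (τ (t * x + (1 - s * t) * (s * z), t * y + (1 - s * t) * z)).1
      = t * (τ (x, y)).1 + (1 - s * t) * (s * z) := by
  simpa [onFst, onSnd, bialexander] using (congrArg (·.2.1) (congrFun h (x, y, z))).symm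

theorem fst_apply_t_mul_of_braid_left
    (h : onFst (bialexander (X := K) s t) ∘ onSnd (bialexander s t) ∘ onFst τ
      = onSnd τ ∘ onFst (bialexander s t) ∘ onSnd (bialexander s t)) (x y : K) :
    (τ (t * x, t * y)).1 = t * (τ (x, y)).1 := by
  simpa using fst_apply_of_braid_left h x y 0

theorem fst_apply_s_mul_of_braid_right
    (h : onSnd (bialexander (X := K) s t) ∘ onFst (bialexander s t) ∘ onSnd τ
      = onFst τ ∘ onSnd (bialexander s t) ∘ onFst (bialexander s t)) (x y : K) :
    (τ (s * x, s * y)).1 = s * (τ (x, y)).1 := by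
  simpa [onFst, onSnd, bialexander] using (congrArg (·.1) (congrFun h (0, x, y))).symm

theorem snd_apply_of_braid_right
    (h : onSnd (bialexander (X := K) s t) ∘ onFst (bialexander s t) ∘ onSnd τ
      = onFst τ ∘ onSnd (bialexander s t) ∘ onFst (bialexander s t)) (x y : K) :
    (1 - s * t) * (τ (x, y)).2 = (1 - s * t) * (t * x + y - t * (τ (x, y)).1) := by
  have h3 := congrArg (·.2.2) (congrFun h (0, x, y))
  simp only [Function.comp_apply, onFst, onSnd, bialexander, smul_eq_mul] at h3
  linear_combination h3

end CommRing

theorem Units.apply_eq_apply_one_mul_of_closure_eq_top {K : Type*} [Field K] {f : K → K}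
    {G : Set Kˣ} (hG : Subgroup.closure G = ⊤) (hf : ∀ u ∈ G, ∀ w, f (u * w) = u * f w)
    (h0 : f 0 = 0) (w : K) : f w = f 1 * w := by
  have hunits (u : Kˣ) : ∀ w, f (u * w) = u * f w := by
    induction hG ▸ Subgroup.mem_top u using Subgroup.closure_induction with
    | mem u hu => exact hf u hu
    | one => simp
    | mul a b _ _ ha hb => intro w; rw [Units.val_mul, mul_assoc, ha, hb, mul_assoc]
    | inv a _ ha =>
      intro w
      have hw := ha (↑a⁻¹ * w)
      rw [Units.mul_inv_cancel_left] at hw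
      rw [hw, Units.inv_mul_cancel_left]
  rcases eq_or_ne w 0 with rfl | hw
  · rw [h0, mul_zero]
  · simpa [mul_comm] using hunits (Units.mk0 w hw) 1

section Field

variable {K : Type*} [Field K] {s t : K} {τ : K × K → K × K}

theorem one_sub_mul_ne_zero_of_ne_inv (hts : t ≠ s⁻¹) : 1 - s * t ≠ 0 :=
  sub_ne_zero.2 fun h => hts (eq_inv_of_mul_eq_one_right h.symm)

theorem fst_apply_add_of_braid_left (ht : t ≠ 0) (hst : 1 - s * t ≠ 0)
    (h : onFst (bialexander (X := K) s t) ∘ onSnd (bialexander s t) ∘ onFst τ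
      = onSnd τ ∘ onFst (bialexander s t) ∘ onSnd (bialexander s t)) (x y c : K) :
    (τ (x + s * c, y + c)).1 = (τ (x, y)).1 + s * c := by
  have key := fst_apply_of_braid_left h (x / t) (y / t) (c / (1 - s * t))
  have scale := fst_apply_t_mul_of_braid_left h (x / t) (y / t)
  simp only [mul_div_cancel₀ _ ht, mul_left_comm (1 - s * t), mul_div_cancel₀ _ hst] at key scale
  rw [key, scale]

theorem fst_apply_eq_fst_apply_sub_add (ht : t ≠ 0) (hst : 1 - s * t ≠ 0)
    (h : onFst (bialexander (X := K) s t) ∘ onSnd (bialexander s t) ∘ onFst τ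
      = onSnd τ ∘ onFst (bialexander s t) ∘ onSnd (bialexander s t)) (x y : K) :
    (τ (x, y)).1 = (τ (x - s * y, 0)).1 + s * y := by
  simpa using fst_apply_add_of_braid_left ht hst h (x - s * y) 0 y

theorem snd_apply_eq_of_braid_right (hst : 1 - s * t ≠ 0)
    (h : onSnd (bialexander (X := K) s t) ∘ onFst (bialexander s t) ∘ onSnd τ
      = onFst τ ∘ onSnd (bialexander s t) ∘ onFst (bialexander s t)) (x y : K) :
    (τ (x, y)).2 = t * x + y - t * (τ (x, y)).1 :=
  mul_left_cancel₀ hst (snd_apply_of_braid_right h x y)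

theorem fst_apply_zero_zero (hts : t ≠ s⁻¹)
    (h2 : onFst (bialexander (X := K) s t) ∘ onSnd (bialexander s t) ∘ onFst τ
      = onSnd τ ∘ onFst (bialexander s t) ∘ onSnd (bialexander s t))
    (h3 : onSnd (bialexander (X := K) s t) ∘ onFst (bialexander s t) ∘ onSnd τ
      = onFst τ ∘ onSnd (bialexander s t) ∘ onFst (bialexander s t)) :
    (τ (0, 0)).1 = 0 := by
  by_contra h0
  have ht : t = 1 :=
    (mul_eq_right₀ h0).1 (by simpa using (fst_apply_t_mul_of_braid_left h2 0 0).symm)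
  have hs : s = 1 :=
    (mul_eq_right₀ h0).1 (by simpa using (fst_apply_s_mul_of_braid_right h3 0 0).symm)
  exact hts (by rw [ht, hs, inv_one])

theorem fst_apply_neg (hs : s ≠ 0) (ht : t ≠ 0) (hst : 1 - s * t ≠ 0)
    (h1 : τ ∘ bialexander (X := K) s t = bialexander s t ∘ τ)
    (h2 : onFst (bialexander (X := K) s t) ∘ onSnd (bialexander s t) ∘ onFst τ
      = onSnd τ ∘ onFst (bialexander s t) ∘ onSnd (bialexander s t))
    (h3 : onSnd (bialexander (X := K) s t) ∘ onFst (bialexander s t) ∘ onSnd τ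
      = onFst τ ∘ onSnd (bialexander s t) ∘ onFst (bialexander s t)) (w : K) :
    (τ (-w, 0)).1 = -(τ (w, 0)).1 := by
  have hcomm := fst_apply_bialexander_of_comm h1 w 0
  have hsnd := snd_apply_eq_of_braid_right hst h3 w 0
  have hshift := fst_apply_eq_fst_apply_sub_add ht hst h2 0 (t * w)
  have hs_mul := fst_apply_s_mul_of_braid_right h3 (t * -w) 0
  have ht_mul := fst_apply_t_mul_of_braid_left h2 (-w) 0
  simp only [mul_zero, add_zero] at hcomm hs_mul ht_mul
  rw [show 0 - s * (t * w) = s * (t * -w) by ring, hs_mul, ht_mul] at hshift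
  have : s * t * ((τ (-w, 0)).1 + (τ (w, 0)).1) = 0 := by
    linear_combination hcomm - hshift + s * hsnd
  linear_combination (mul_eq_zero.1 this).resolve_left (mul_ne_zero hs ht)

theorem fst_apply_eq_of_isSingularPair (hs : s ≠ 0) (ht : t ≠ 0) (hts : t ≠ s⁻¹)
    (hgen : Subgroup.closure {u : Kˣ | (u : K) = -1 ∨ (u : K) = s ∨ (u : K) = t} = ⊤)
    (hτ : IsSingularPair (bialexander (X := K) s t) τ) (x y : K) :
    (τ (x, y)).1 = (τ (1, 0)).1 * (x - s * y) + s * y := by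
  obtain ⟨-, -, -, -, h1, h2, h3⟩ := hτ
  have hst := one_sub_mul_ne_zero_of_ne_inv hts
  rw [fst_apply_eq_fst_apply_sub_add ht hst h2,
    Units.apply_eq_apply_one_mul_of_closure_eq_top (f := fun w => (τ (w, 0)).1) hgen ?_
      (fst_apply_zero_zero hts h2 h3)]
  rintro u (hu | hu | hu) w <;> simp only [hu]
  · rw [neg_one_mul, neg_one_mul, fst_apply_neg hs ht hst h1 h2 h3]
  · simpa using fst_apply_s_mul_of_braid_right h3 w 0
  · simpa using fst_apply_t_mul_of_braid_left h2 w 0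

theorem apply_eq_of_isSingularPair (hs : s ≠ 0) (ht : t ≠ 0) (hts : t ≠ s⁻¹)
    (hgen : Subgroup.closure {u : Kˣ | (u : K) = -1 ∨ (u : K) = s ∨ (u : K) = t} = ⊤)
    (hτ : IsSingularPair (bialexander (X := K) s t) τ) (x y : K) :
    τ (x, y) = ((τ (0, 1)).1 * y + (1 - (τ (0, 1)).1 / s) * x,
      ((τ (0, 1)).1 * t / s) * x + (1 - (τ (0, 1)).1 * t) * y) := by
  have hfst := fst_apply_eq_of_isSingularPair hs ht hts hgen hτ
  obtain ⟨-, -, -, -, -, -, h3⟩ := hτ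
  have hsnd := snd_apply_eq_of_braid_right (one_sub_mul_ne_zero_of_ne_inv hts) h3 x y
  rw [hfst 0 1]
  refine Prod.ext ?_ ?_
  · rw [hfst]; field_simp; ring
  · rw [hsnd, hfst]; field_simp; ring

end Field

theorem singularPair_bialexander_linear_general {K : Type*} [Field K]
    (s t : K) (hs : s ≠ 0) (ht : t ≠ 0) (hts : t ≠ s⁻¹)
    (hgen : Subgroup.closure {u : Kˣ | (u : K) = -1 ∨ (u : K) = s ∨ (u : K) = t} = ⊤)
    (τ : K × K → K × K)
    (hτ : IsSingularPair (bialexander (X := K) s t) τ) :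
    IsLinearMap K τ ∧
      (∀ y : K, (τ (0, y)).1 = (τ (0, 1)).1 * y) ∧
      (∀ x : K, (τ (s * x, 0)).2 = (τ (0, 1)).1 * t * x) ∧
      (∀ x y : K,
        τ (x, y) = ((τ (0, 1)).1 * y + (1 - (τ (0, 1)).1 / s) * x,
          ((τ (0, 1)).1 * t / s) * x + (1 - (τ (0, 1)).1 * t) * y)) := by
  have hformula := apply_eq_of_isSingularPair hs ht hts hgen hτ
  set a := (τ (0, 1)).1
  have hlinear : IsLinearMap K τ :=
    isLinearMap_of_apply_eq (α := 1 - a / s) (β := a) (γ := a * t / s) (δ := 1 - a * t)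
      fun x y => by rw [hformula]; exact Prod.ext (by ring) (by ring)
  refine ⟨hlinear, fun y => ?_, fun x => ?_, hformula⟩
  · simp [hformula 0 y]
  · rw [hformula]
    field_simp
    ring

/-- over a finite field `K`, if `s,t ≠ 0`, `t ≠ s⁻¹`, and `{-1, s, t}`
generates `Kˣ`, then any `τ` giving a singular pair with the bialexander switch is
`K`-linear and is given by the explicit formula determined by `a := τ¹(0,1)`. -/
theorem singularPair_bialexander_linear {K : Type*} [Field K] [Fintype K]
    (s t : K) (hs : s ≠ 0) (ht : t ≠ 0) (hts : t ≠ s⁻¹)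
    (hgen : Subgroup.closure {u : Kˣ | (u : K) = -1 ∨ (u : K) = s ∨ (u : K) = t} = ⊤)
    (τ : K × K → K × K)
    (hτ : IsSingularPair (bialexander (X := K) s t) τ) :
    IsLinearMap K τ ∧
      (∀ y : K, (τ (0, y)).1 = (τ (0, 1)).1 * y) ∧
      (∀ x : K, (τ (s * x, 0)).2 = (τ (0, 1)).1 * t * x) ∧
      (∀ x y : K,
        τ (x, y) = ((τ (0, 1)).1 * y + (1 - (τ (0, 1)).1 / s) * x,
          ((τ (0, 1)).1 * t / s) * x + (1 - (τ (0, 1)).1 * t) * y)) :=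
  singularPair_bialexander_linear_general s t hs ht hts hgen τ hτ

end Paper
end

section
/- Let K be a field and let s, t, a ∈ K with s ≠ 0. Define the linear map τ_a : K×K → K×K by τ_a(x,y) = ( a·y + (1 − a/s)·x , (a·t/s)·x + (1 − a·t)·y ). Then τ_a is bijective if and only if (st + 1)·a ≠ s. Consequently, if K is a finite field, s, t ∈ K^× with t ≠ s⁻¹ and {−1, s, t} generates K^×, then the number of bijective, left and right invertible maps τ : K×K → K×K such that (K, S_{s,t}, τ) is a singular pair is at most |K| − 1. -/
/-!
Axioms (2) and (3) of a singular pair with `S = S_{s,t}` show that `τ¹` is homogeneous for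
multiplication by `s` and by `t` and satisfies `τ¹(u + s w, v + w) = τ¹(u, v) + s w`, so that
`τ¹(x, y) = x + ψ(y - x/s)` with `ψ = τ¹(0, ·)`, while `τ²` is determined by `τ¹`. Commutation
with `S` makes `ψ` odd, so `ψ` commutes with multiplication by `-1`, `s`, `t`, hence by every
unit; thus `ψ r = a r` and `τ = τ_a`, with `a ≠ 0` by left invertibility. This bounds the number
of such `τ` by `|Kˣ|`. Bijectivity of `τ_a` is the nonvanishing of its determinant
`(s - (s t + 1) a) / s`.
-/

namespace Paper

theorem bijective_linear_prod_iff {K : Type*} [Field K] (α β γ δ : K) :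
    Function.Bijective (fun p : K × K => (α * p.1 + β * p.2, γ * p.1 + δ * p.2)) ↔
      α * δ - β * γ ≠ 0 := by
  have hM : ⇑(Matrix.toLin (.finTwoProd K) (.finTwoProd K) !![α, β; γ, δ]) =
      fun p : K × K => (α * p.1 + β * p.2, γ * p.1 + δ * p.2) :=
    funext (Matrix.toLin_finTwoProd_apply α β γ δ)
  rw [← Matrix.det_fin_two_of, ← isUnit_iff_ne_zero, ← Matrix.isUnit_iff_isUnit_det,
    ← Matrix.isUnit_toLin_iff (.finTwoProd K), Module.End.isUnit_iff, hM]

theorem eq_mul_of_closure_eq_top {K : Type*} [Field K] {ψ : K → K} {S : Set Kˣ}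
    (hS : Subgroup.closure S = ⊤) (hψS : ∀ u ∈ S, ∀ r, ψ (u * r) = u * ψ r) (hψ0 : ψ 0 = 0)
    (r : K) : ψ r = ψ 1 * r := by
  have hunits (u : Kˣ) : ∀ r, ψ (u * r) = u * ψ r := by
    induction hS ▸ Subgroup.mem_top u using Subgroup.closure_induction with
    | mem v hv => exact hψS v hv
    | one => simp
    | mul v w _ _ hv hw => intro r; rw [Units.val_mul, mul_assoc, hv, hw, mul_assoc]
    | inv v _ hv =>
      intro r
      rw [eq_comm, Units.inv_mul_eq_iff_eq_mul, ← hv, Units.mul_inv_cancel_left]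
  rcases eq_or_ne r 0 with rfl | hr
  · rw [hψ0, mul_zero]
  · simpa [mul_comm] using hunits (Units.mk0 r hr) 1

section Tau

variable {K : Type*} [Field K] {s t : K}

def tau (s t a : K) : K × K → K × K :=
  fun p => (a * p.2 + (1 - a / s) * p.1, (a * t / s) * p.1 + (1 - a * t) * p.2)

theorem bijective_tau_iff (a : K) (hs : s ≠ 0) :
    Function.Bijective (tau s t a) ↔ (s * t + 1) * a ≠ s := by
  have htau : tau s t a = fun p : K × K =>
      ((1 - a / s) * p.1 + a * p.2, (a * t / s) * p.1 + (1 - a * t) * p.2) := by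
    funext p; simp only [tau, add_comm]
  have hdet : (1 - a / s) * (1 - a * t) - a * (a * t / s) = (s - (s * t + 1) * a) / s := by
    field_simp; ring
  rw [htau, bijective_linear_prod_iff, hdet, div_ne_zero_iff, sub_ne_zero, ne_comm]
  exact and_iff_left hs

variable {τ : K × K → K × K}

-- `_of_yb_left` lemmas use axiom (2) of a singular pair, `_of_yb_right` ones axiom (3).

theorem fst_apply_smul_of_yb_right
    (h3 : onSnd (bialexander s t) ∘ onFst (bialexander s t) ∘ onSnd τ =
      onFst τ ∘ onSnd (bialexander s t) ∘ onFst (bialexander s t)) (y z : K) :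
    (τ (s * y, s * z)).1 = s * (τ (y, z)).1 := by
  have h := congrFun h3 (0, y, z)
  simp only [onSnd, onFst, bialexander, Function.comp_apply, smul_eq_mul, Prod.mk.injEq] at h
  exact h.1.symm

theorem snd_apply_of_yb_right (hst : s * t ≠ 1)
    (h3 : onSnd (bialexander s t) ∘ onFst (bialexander s t) ∘ onSnd τ =
      onFst τ ∘ onSnd (bialexander s t) ∘ onFst (bialexander s t)) (y z : K) :
    (τ (y, z)).2 = t * y + z - t * (τ (y, z)).1 := by
  have h := congrFun h3 (0, y, z)
  simp only [onSnd, onFst, bialexander, Function.comp_apply, smul_eq_mul, Prod.mk.injEq] at h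
  refine mul_left_cancel₀ (sub_ne_zero.mpr hst.symm) ?_
  linear_combination h.2.2

theorem fst_apply_of_yb_left
    (h2 : onFst (bialexander s t) ∘ onSnd (bialexander s t) ∘ onFst τ =
      onSnd τ ∘ onFst (bialexander s t) ∘ onSnd (bialexander s t)) (x y z : K) :
    (τ (t * x + (1 - s * t) * (s * z), t * y + (1 - s * t) * z)).1 =
      t * (τ (x, y)).1 + (1 - s * t) * (s * z) := by
  have h := congrFun h2 (x, y, z)
  simp only [onSnd, onFst, bialexander, Function.comp_apply, smul_eq_mul, Prod.mk.injEq] at h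
  exact (congrArg Prod.fst h.2).symm

theorem fst_apply_mul_left_of_yb_left
    (h2 : onFst (bialexander s t) ∘ onSnd (bialexander s t) ∘ onFst τ =
      onSnd τ ∘ onFst (bialexander s t) ∘ onSnd (bialexander s t)) (x y : K) :
    (τ (t * x, t * y)).1 = t * (τ (x, y)).1 := by
  simpa using fst_apply_of_yb_left h2 x y 0

theorem fst_apply_add_of_yb_left (ht : t ≠ 0) (hst : s * t ≠ 1)
    (h2 : onFst (bialexander s t) ∘ onSnd (bialexander s t) ∘ onFst τ =
      onSnd τ ∘ onFst (bialexander s t) ∘ onSnd (bialexander s t)) (u v w : K) :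
    (τ (u + s * w, v + w)).1 = (τ (u, v)).1 + s * w := by
  have hc : 1 - s * t ≠ 0 := sub_ne_zero.mpr hst.symm
  have key := fst_apply_of_yb_left h2 (u / t) (v / t) (w / (1 - s * t))
  rwa [← fst_apply_mul_left_of_yb_left h2, mul_left_comm (1 - s * t),
    mul_div_cancel₀ _ ht, mul_div_cancel₀ _ ht, mul_div_cancel₀ _ hc] at key

theorem fst_apply_of_comm (hcomm : τ ∘ bialexander s t = bialexander s t ∘ τ) (x y : K) :
    (τ (s * y, t * x + (1 - s * t) * y)).1 = s * (τ (x, y)).2 := by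
  simpa [bialexander] using congrArg Prod.fst (congrFun hcomm (x, y))

theorem fst_apply_eq_add_fst_zero (hs : s ≠ 0) (ht : t ≠ 0) (hst : s * t ≠ 1)
    (h2 : onFst (bialexander s t) ∘ onSnd (bialexander s t) ∘ onFst τ =
      onSnd τ ∘ onFst (bialexander s t) ∘ onSnd (bialexander s t)) (x y : K) :
    (τ (x, y)).1 = x + (τ (0, y - x / s)).1 := by
  have h := fst_apply_add_of_yb_left ht hst h2 0 (y - x / s) (x / s)
  rw [zero_add, mul_div_cancel₀ _ hs, sub_add_cancel] at h
  rw [h, add_comm]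

theorem fst_zero_zero (hst : s * t ≠ 1)
    (h2 : onFst (bialexander s t) ∘ onSnd (bialexander s t) ∘ onFst τ =
      onSnd τ ∘ onFst (bialexander s t) ∘ onSnd (bialexander s t))
    (h3 : onSnd (bialexander s t) ∘ onFst (bialexander s t) ∘ onSnd τ =
      onFst τ ∘ onSnd (bialexander s t) ∘ onFst (bialexander s t)) :
    (τ (0, 0)).1 = 0 := by
  have h_s := fst_apply_smul_of_yb_right h3 0 0
  have h_t := fst_apply_mul_left_of_yb_left h2 0 0
  simp only [mul_zero] at h_s h_t
  refine (mul_eq_zero.mp ?_).resolve_left (sub_ne_zero.mpr hst.symm)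
  linear_combination h_s + s * h_t

theorem fst_zero_neg (hs : s ≠ 0) (ht : t ≠ 0) (hst : s * t ≠ 1)
    (hcomm : τ ∘ bialexander s t = bialexander s t ∘ τ)
    (h2 : onFst (bialexander s t) ∘ onSnd (bialexander s t) ∘ onFst τ =
      onSnd τ ∘ onFst (bialexander s t) ∘ onSnd (bialexander s t))
    (h3 : onSnd (bialexander s t) ∘ onFst (bialexander s t) ∘ onSnd τ =
      onFst τ ∘ onSnd (bialexander s t) ∘ onFst (bialexander s t)) (r : K) :
    (τ (0, -r)).1 = -(τ (0, r)).1 := by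
  have h := fst_apply_of_comm hcomm r 0
  have hL : (τ (0, t * r)).1 = t * (τ (0, r)).1 := by
    simpa using fst_apply_mul_left_of_yb_left h2 0 r
  have hR : (τ (r, 0)).2 = t * r - t * (τ (r, 0)).1 := by
    simpa using snd_apply_of_yb_right hst h3 r 0
  have hr : (τ (r, 0)).1 = r + (τ (0, -(r / s))).1 := by
    simpa using fst_apply_eq_add_fst_zero hs ht hst h2 r 0
  have hneg : (τ (0, -r)).1 = s * (τ (0, -(r / s))).1 := by
    simpa [mul_div_cancel₀ _ hs] using fst_apply_smul_of_yb_right h3 0 (-(r / s))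
  simp only [mul_zero, add_zero] at h
  refine mul_left_cancel₀ ht ?_
  linear_combination t * hneg + h - hL + s * hR - s * t * hr

theorem exists_eq_tau_of_isSingularPair (hs : s ≠ 0) (ht : t ≠ 0) (hst : s * t ≠ 1)
    (hclo : Subgroup.closure {u : Kˣ | (u : K) = -1 ∨ (u : K) = s ∨ (u : K) = t} = ⊤)
    (hτ : IsSingularPair (bialexander s t) τ) : ∃ a ≠ 0, τ = tau s t a := by
  obtain ⟨-, -, hleft, -, hcomm, h2, h3⟩ := hτ
  set a := (τ (0, 1)).1
  have hlin : ∀ r, (τ (0, r)).1 = a * r := by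
    refine eq_mul_of_closure_eq_top (ψ := fun r ↦ (τ (0, r)).1) hclo ?_ (fst_zero_zero hst h2 h3)
    rintro u (hu | hu | hu) r <;> rw [hu]
    · rw [neg_one_mul, neg_one_mul, fst_zero_neg hs ht hst hcomm h2 h3]
    · simpa using fst_apply_smul_of_yb_right h3 0 r
    · simpa using fst_apply_mul_left_of_yb_left h2 0 r
  have ha : a ≠ 0 := by
    intro ha
    obtain ⟨y, -, hy⟩ := hleft 0 0
    have h1 : (τ (0, 1)).1 = 0 := by rw [hlin, ha, zero_mul]
    exact one_ne_zero ((hy 1 h1).trans (hy 0 (fst_zero_zero hst h2 h3)).symm)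
  refine ⟨a, ha, funext fun ⟨x, y⟩ ↦ ?_⟩
  have h1 : (τ (x, y)).1 = a * y + (1 - a / s) * x := by
    rw [fst_apply_eq_add_fst_zero hs ht hst h2, hlin]
    field_simp
    ring
  refine Prod.ext h1 ?_
  rw [snd_apply_of_yb_right hst h3, h1]
  simp only [tau]
  field_simp
  ring

theorem ncard_setOf_isSingularPair_le [Finite K] (hs : s ≠ 0) (ht : t ≠ 0) (hst : s * t ≠ 1)
    (hclo : Subgroup.closure {u : Kˣ | (u : K) = -1 ∨ (u : K) = s ∨ (u : K) = t} = ⊤) :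
    {τ : K × K → K × K | IsSingularPair (bialexander s t) τ}.ncard ≤ Nat.card K - 1 :=
  calc {τ : K × K → K × K | IsSingularPair (bialexander s t) τ}.ncard
      ≤ (tau s t '' {0}ᶜ).ncard := Set.ncard_le_ncard fun τ hτ ↦
        (exists_eq_tau_of_isSingularPair hs ht hst hclo hτ).imp fun _ ⟨ha, h⟩ ↦ ⟨ha, h.symm⟩
    _ ≤ ({0}ᶜ : Set K).ncard := Set.ncard_image_le
    _ = Nat.card K - 1 := by rw [Set.ncard_compl, Set.ncard_singleton]

end Tau

/-- `τ_a` is bijective iff `(s*t + 1)*a ≠ s`; consequently, over a finite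
field with `t ≠ s⁻¹` and `{-1,s,t}` generating `Kˣ`, there are at most `|K| - 1`
maps `τ` making `(K, S_{s,t}, τ)` a singular pair. -/
theorem tau_a_bijective_iff_and_card {K : Type*} [Field K] (s t a : K) (hs : s ≠ 0) :
    (Function.Bijective
      (fun p : K × K =>
        (a * p.2 + (1 - a / s) * p.1, (a * t / s) * p.1 + (1 - a * t) * p.2)) ↔
      (s * t + 1) * a ≠ s) ∧
    (∀ (_ : Finite K), t ≠ 0 → t ≠ s⁻¹ →
      Subgroup.closure {u : Kˣ | (u : K) = -1 ∨ (u : K) = s ∨ (u : K) = t} = ⊤ →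
      Set.ncard {τ : K × K → K × K | IsSingularPair (bialexander (X := K) s t) τ} ≤
        Nat.card K - 1) :=
  ⟨bijective_tau_iff a hs, fun _ ht hts hclo ↦ ncard_setOf_isSingularPair_le hs ht
    (fun h ↦ hts (eq_inv_of_mul_eq_one_right h)) hclo⟩

end Paper
end

section
/- Let (X,S) be a biquandle and let flip : X×X → X×X be flip(x,y) = (y,x). Then (X, S, flip) is a singular pair if and only if for all x,y,z ∈ X: S¹(x,y) = S²(y,x); S¹(S²(x,y), z) = S¹(x,z); S²(S²(x,y), z) = S²(S²(x,z), y); S¹(x, S¹(y,z)) = S¹(y, S¹(x,z)); and S²(y,z) = S²(y, S¹(x,z)). -/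
namespace Paper

/-- for a biquandle `(X,S)`, `(X, S, flip)` is a singular pair iff the five
listed identities hold. -/
theorem singularPair_flip_iff {X : Type*} (S : X × X → X × X) (hS : IsBiquandle S) :
    IsSingularPair S (flipMap X) ↔
      (∀ x y : X, (S (x, y)).1 = (S (y, x)).2) ∧
      (∀ x y z : X, (S ((S (x, y)).2, z)).1 = (S (x, z)).1) ∧
      (∀ x y z : X, (S ((S (x, y)).2, z)).2 = (S ((S (x, z)).2, y)).2) ∧
      (∀ x y z : X, (S (x, (S (y, z)).1)).1 = (S (y, (S (x, z)).1)).1) ∧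
      (∀ x y z : X, (S (y, z)).2 = (S (y, (S (x, z)).1)).2) := by
  constructor
  · rintro ⟨-, -, -, -, hc, h2, h3⟩
    refine ⟨?_, ?_, ?_, ?_, ?_⟩
    · intro x y
      have := congrFun hc (x, y)
      simp only [Function.comp, flipMap] at this
      exact (congrArg Prod.snd this).symm ▸ (congrArg Prod.snd this)
    · intro x y z
      have := congrFun h3 (x, y, z)
      simp only [Function.comp, onFst, onSnd, flipMap] at this
      exact (congrArg (fun p => p.1) this).symm
    · intro x y z
      have := congrFun h3 (x, y, z)
      simp only [Function.comp, onFst, onSnd, flipMap] at this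
      exact (congrArg (fun p => p.2.2) this).symm
    · intro x y z
      have := congrFun h2 (x, y, z)
      simp only [Function.comp, onFst, onSnd, flipMap] at this
      exact (congrArg (fun p => p.1) this).symm
    · intro x y z
      have := congrFun h2 (x, y, z)
      simp only [Function.comp, onFst, onSnd, flipMap] at this
      exact (congrArg (fun p => p.2.1) this).symm
  · rintro ⟨e1, e2, e3, e4, e5⟩
    refine ⟨hS, ⟨fun a b hab => ?_, fun p => ⟨(p.2, p.1), rfl⟩⟩,
      fun x z => ⟨z, rfl, fun y hy => hy⟩, fun y t => ⟨t, rfl, fun x hx => hx⟩,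
      ?_, ?_, ?_⟩
    · simpa [flipMap, Prod.ext_iff, and_comm] using hab
    · funext p
      obtain ⟨x, y⟩ := p
      simp only [Function.comp, flipMap, Prod.ext_iff]
      exact ⟨(e1 y x).symm, e1 x y⟩
    · funext p
      obtain ⟨x, y, z⟩ := p
      simp only [Function.comp, onFst, onSnd, flipMap, Prod.mk.injEq]
      exact ⟨(e4 x y z).symm, (e5 x y z).symm, e5 y x z⟩
    · funext p
      obtain ⟨x, y, z⟩ := p
      simp only [Function.comp, onFst, onSnd, flipMap, Prod.ext_iff]
      exact ⟨(e2 x y z).symm, e2 x z y, e3 x z y⟩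

end Paper
end

section
/- Let X be a set and let s : X → X be an involutive bijection (s∘s = id). Define S(x,y) = (s(y), s(x)). Then (X,S) is a biquandle and (X, S, flip) is a singular pair, where flip(x,y) = (y,x). -/
namespace Paper

/-- if `s : X → X` is an involutive bijection and `S(x,y) = (s y, s x)`,
then `(X,S)` is a biquandle and `(X, S, flip)` is a singular pair. -/
theorem biquandle_and_singularPair_of_involution {X : Type*} (s : X → X)
    (hbij : Function.Bijective s) (hinv : s ∘ s = id) :
    IsBiquandle (fun p : X × X => (s p.2, s p.1)) ∧
      IsSingularPair (fun p : X × X => (s p.2, s p.1)) (flipMap X) := by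
  have hss : ∀ x, s (s x) = x := fun x => congrFun hinv x
  have hsinj : Function.Injective s := hbij.1
  set S : X × X → X × X := fun p : X × X => (s p.2, s p.1) with hS
  have hSS : ∀ p, S (S p) = p := by
    intro p; simp [hS, hss]
  have hSbij : Function.Bijective S :=
    Function.bijective_iff_has_inverse.mpr ⟨S, hSS, hSS⟩
  have hbq : IsBiquandle S := by
    refine ⟨⟨hSbij, ?_⟩, ?_, ?_, s, hbij, ?_⟩
    · funext p
      obtain ⟨x, y, z⟩ := p
      simp [onFst, onSnd, hS, hss]
    · intro x z
      refine ⟨s z, by simp [hS, hss], fun y hy => ?_⟩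
      simp only [hS] at hy
      exact hsinj (by rw [hy, hss])
    · intro y t
      refine ⟨s t, by simp [hS, hss], fun x hx => ?_⟩
      simp only [hS] at hx
      exact hsinj (by rw [hx, hss])
    · intro x y
      constructor
      · intro h
        have h2 : s x = y := congrArg Prod.snd h
        exact h2.symm
      · intro h
        subst h
        have h1 : S (x, s x) = (s (s x), s x) := rfl
        rw [h1, hss]
  refine ⟨hbq, hbq, ?_, ?_, ?_, ?_, ?_, ?_⟩
  · exact Function.bijective_iff_has_inverse.mpr
      ⟨flipMap X, fun p => rfl, fun p => rfl⟩
  · intro x z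
    exact ⟨z, rfl, fun y hy => hy⟩
  · intro y t
    exact ⟨t, rfl, fun x hx => hx⟩
  · funext p; obtain ⟨x, y⟩ := p; rfl
  · funext p; obtain ⟨x, y, z⟩ := p
    simp [onFst, onSnd, flipMap, hS, hss]
  · funext p; obtain ⟨x, y, z⟩ := p
    simp [onFst, onSnd, flipMap, hS, hss]

end Paper
end

section
/- Let X be a set, let S = flip (flip(x,y) = (y,x)), and let τ : X×X → X×X be a bijection that is left and right invertible. Then (X, flip, τ) is a singular pair if and only if τ¹(y,x) = τ²(x,y) for all x,y ∈ X. -/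
namespace Paper

/-- `(X, flip, τ)` is a singular pair iff `τ¹(y,x) = τ²(x,y)` for all `x,y`. -/
theorem singularPair_flip_tau_iff {X : Type*} (τ : X × X → X × X)
    (hτbij : Function.Bijective τ) (hτl : LeftInvertible τ) (hτr : RightInvertible τ) :
    IsSingularPair (flipMap X) τ ↔ ∀ x y : X, (τ (y, x)).1 = (τ (x, y)).2 := by
  constructor
  · rintro ⟨-, -, -, -, hc, -, -⟩ x y
    have h := congrFun hc (x, y)
    simp only [Function.comp, flipMap] at h
    exact congrArg Prod.fst h
  · intro h
    refine ⟨⟨⟨?_, ?_⟩, ?_, ?_, id, Function.bijective_id, ?_⟩, hτbij, hτl, hτr, ?_, ?_, ?_⟩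
    · exact Function.Involutive.bijective (fun p => rfl)
    · rfl
    · exact fun x z => ⟨z, rfl, fun y hy => hy⟩
    · exact fun y t => ⟨t, rfl, fun x hx => hx⟩
    · intro x y
      constructor
      · intro hxy
        exact (Prod.ext_iff.mp hxy).1
      · rintro rfl
        rfl
    · funext p
      have h1 := h p.1 p.2
      have h2 := h p.2 p.1
      simp only [Function.comp, flipMap]
      exact Prod.ext h1 h2.symm
    · rfl
    · rfl

end Paper
end

section
/- Let (X,◁) be an involutive quandle, i.e. a quandle satisfying (x◁y)◁y = x for all x,y, let S(x,y) = (y, x◁y), and let τ(x,y) = (R₁(x,y), R₂(x,y)) be a bijection of X×X that is left and right invertible. Then (X, S, τ) is a singular pair if and only if for all x,y,z ∈ X: (y◁z)◁R₂(x,z) = (y◁x)◁R₁(x,z); R₁(x,y) = R₂(y◁x, x); R₂(x,y) = R₁(y◁x, x) ◁ R₂(y◁x, x); R₁(x◁y, z)◁y = R₁(x, z◁y); and R₂(x◁y, z) = R₂(x, z◁y)◁y. -/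
namespace Paper

/-- for an involutive quandle `(X,◁)` with `S(x,y) = (y, x◁y)` and
`τ = (R₁, R₂)` bijective, left and right invertible, `(X,S,τ)` is a singular pair iff
the five singquandle identities hold. -/
theorem singularPair_involutive_quandle_iff {X : Type*} (op : X → X → X)
    (hopbij : ∀ y : X, Function.Bijective (fun x => op x y))
    (hdist : ∀ x y z : X, op (op x y) z = op (op x z) (op y z))
    (hidem : ∀ x : X, op x x = x)
    (hinvol : ∀ x y : X, op (op x y) y = x)
    (R₁ R₂ : X × X → X)
    (hτbij : Function.Bijective (fun p : X × X => (R₁ p, R₂ p)))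
    (hτl : LeftInvertible (fun p : X × X => (R₁ p, R₂ p)))
    (hτr : RightInvertible (fun p : X × X => (R₁ p, R₂ p))) :
    IsSingularPair (fun p : X × X => (p.2, op p.1 p.2)) (fun p : X × X => (R₁ p, R₂ p)) ↔
      ((∀ x y z : X, op (op y z) (R₂ (x, z)) = op (op y x) (R₁ (x, z))) ∧
       (∀ x y : X, R₁ (x, y) = R₂ (op y x, x)) ∧
       (∀ x y : X, R₂ (x, y) = op (R₁ (op y x, x)) (R₂ (op y x, x))) ∧
       (∀ x y z : X, op (R₁ (op x y, z)) y = R₁ (x, op z y)) ∧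
       (∀ x y z : X, R₂ (op x y, z) = op (R₂ (x, op z y)) y)) := by
  have hinj : ∀ y a b : X, op a y = op b y → a = b := by
    intro y a b h
    have := congrArg (fun t => op t y) h
    simpa [hinvol] using this
  have hbi : IsBiquandle (fun p : X × X => (p.2, op p.1 p.2)) := by
    refine ⟨⟨?_, ?_⟩, ?_, ?_, ?_⟩
    · refine Function.bijective_iff_has_inverse.mpr
        ⟨fun p => (op p.2 p.1, p.1), ?_, ?_⟩
      · intro p; obtain ⟨x, y⟩ := p; simp [hinvol]
      · intro p; obtain ⟨x, y⟩ := p; simp [hinvol]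
    · funext p
      obtain ⟨x, y, z⟩ := p
      simp only [onFst, onSnd, Function.comp_apply, Prod.mk.injEq]
      exact ⟨trivial, trivial, (hdist x y z).symm⟩
    · intro x z
      exact ⟨z, rfl, fun y hy => hy⟩
    · intro y t
      refine ⟨op t y, hinvol t y, fun x hx => ?_⟩
      simp only at hx
      rw [← hx, hinvol]
    · refine ⟨id, Function.bijective_id, fun x y => ?_⟩
      constructor
      · intro h
        exact (congrArg Prod.fst h)
      · intro h
        subst h
        simp [hidem]
  constructor
  · rintro ⟨-, -, -, -, hcomm, hA, hB⟩
    have hc : ∀ x y : X, R₁ (y, op x y) = R₂ (x, y) ∧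
        R₂ (y, op x y) = op (R₁ (x, y)) (R₂ (x, y)) := by
      intro x y
      have h := congrFun hcomm (x, y)
      simpa [Function.comp, Prod.ext_iff] using h
    have hAp : ∀ x y z : X, op (R₁ (x, y)) z = R₁ (op x z, op y z) ∧
        op (R₂ (x, y)) z = R₂ (op x z, op y z) := by
      intro x y z
      have h := congrFun hA (x, y, z)
      simpa [onFst, onSnd, Function.comp, Prod.ext_iff] using h
    have hBp : ∀ x y z : X,
        op (op x (R₁ (y, z))) (R₂ (y, z)) = op (op x y) z := by
      intro x y z
      have h := congrFun hB (x, y, z)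
      simpa [onFst, onSnd, Function.comp, Prod.ext_iff] using h
    refine ⟨?_, ?_, ?_, ?_, ?_⟩
    · intro x y z
      have h := hBp (op y x) x z
      rw [hinvol] at h
      rw [← h, hinvol]
    · intro x y
      have h := (hc (op y x) x).1
      rwa [hinvol] at h
    · intro x y
      have h := (hc (op y x) x).2
      rwa [hinvol] at h
    · intro x y z
      have h := (hAp x (op z y) y).1
      rw [hinvol] at h
      rw [← h, hinvol]
    · intro x y z
      have h := (hAp x (op z y) y).2
      rw [hinvol] at h
      exact h.symm
  · rintro ⟨h1, h2, h3, h4, h5⟩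
    refine ⟨hbi, hτbij, hτl, hτr, ?_, ?_, ?_⟩
    · funext p
      obtain ⟨x, y⟩ := p
      have e1 : R₁ (y, op x y) = R₂ (x, y) := by
        have := h2 y (op x y); rwa [hinvol] at this
      have e2 : R₂ (y, op x y) = op (R₁ (x, y)) (R₂ (x, y)) := by
        have := h3 y (op x y); rwa [hinvol] at this
      simp [Function.comp, Prod.ext_iff, e1, e2]
    · funext p
      obtain ⟨x, y, z⟩ := p
      have e1 : op (R₁ (x, y)) z = R₁ (op x z, op y z) := by
        have := h4 x z (op y z)
        rw [hinvol] at this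
        rw [← this, hinvol]
      have e2 : op (R₂ (x, y)) z = R₂ (op x z, op y z) := by
        have := h5 x z (op y z)
        rw [hinvol] at this
        exact this.symm
      simp [onFst, onSnd, Function.comp, Prod.ext_iff, e1, e2]
    · funext p
      obtain ⟨x, y, z⟩ := p
      have h := h1 y (op x y) z
      rw [hinvol] at h
      have e : op (op x (R₁ (y, z))) (R₂ (y, z)) = op (op x y) z := by
        rw [← h, hinvol]
      simp [onFst, onSnd, Function.comp, Prod.ext_iff, e]


end Paper
end

section
/- Let (X,◁) be a quandle and let S(x,y) = (y, x◁y). Then (X, S, flip) is a singular pair (where flip(x,y) = (y,x)) if and only if the quandle operation is trivial, i.e. x◁y = x for all x,y ∈ X (equivalently, S = flip). -/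
namespace Paper

/-- for a quandle `(X,◁)` with `S(x,y) = (y, x◁y)`, `(X, S, flip)` is a
singular pair iff the quandle operation is trivial, i.e. `x◁y = x` for all `x,y`
(equivalently, `S = flip`). -/
theorem singularPair_quandle_flip_iff {X : Type*} (op : X → X → X)
    (hopbij : ∀ y : X, Function.Bijective (fun x => op x y))
    (hdist : ∀ x y z : X, op (op x y) z = op (op x z) (op y z))
    (hidem : ∀ x : X, op x x = x) :
    IsSingularPair (fun p : X × X => (p.2, op p.1 p.2)) (flipMap X) ↔
      ∀ x y : X, op x y = x := by
  constructor
  · intro h x y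
    have h5 := h.2.2.2.2.1
    have hxy := congrFun h5 (x, y)
    simp only [flipMap, Function.comp, Prod.ext_iff] at hxy
    exact hxy.1
  · intro h
    have hS : (fun p : X × X => (p.2, op p.1 p.2)) = flipMap X := by
      funext p; simp [flipMap, h]
    rw [hS]
    have hinv : Function.Involutive (flipMap X) := fun p => rfl
    refine ⟨⟨⟨hinv.bijective, ?_⟩, ?_, ?_, ?_⟩, hinv.bijective, ?_, ?_, rfl, ?_, ?_⟩
    · funext p; rfl
    · intro x z; exact ⟨z, rfl, fun y hy => hy⟩
    · intro y t; exact ⟨t, rfl, fun x hx => hx⟩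
    · exact ⟨id, Function.bijective_id, by
        intro x y
        simp only [flipMap, Prod.mk.injEq, id_eq]
        constructor
        · exact fun hh => hh.1
        · rintro rfl; exact ⟨rfl, rfl⟩⟩
    · intro x z; exact ⟨z, rfl, fun y hy => hy⟩
    · intro y t; exact ⟨t, rfl, fun x hx => hx⟩
    · funext p; rfl
    · funext p; rfl

end Paper
end

section
/- Let (X,S) be an involutive set-theoretic solution of the Yang–Baxter equation (S∘S = id), let H be a set, and let h : X×X → H satisfy h(S¹(x,y), S¹(S²(x,y), z)) = h(y,z) for all x,y,z ∈ X. Then for all x,y,z ∈ X: h(S²(x, S¹(y,z)), S²(y,z)) = h(x,y) and h(x, S¹(y,z)) = h(S²(x,y), z). -/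
namespace Paper

/-- for an involutive YB solution and `h` satisfying (h1),
`h(S²(x,S¹(y,z)), S²(y,z)) = h(x,y)` and `h(x, S¹(y,z)) = h(S²(x,y), z)`. -/
theorem h1_consequences_involutive {X : Type*} {H : Type*}
    (S : X × X → X × X) (hS : IsYB S) (hinv : S ∘ S = id)
    (h : X × X → H)
    (h1 : ∀ x y z : X, h ((S (x, y)).1, (S ((S (x, y)).2, z)).1) = h (y, z)) :
    (∀ x y z : X, h ((S (x, (S (y, z)).1)).2, (S (y, z)).2) = h (x, y)) ∧
    (∀ x y z : X, h (x, (S (y, z)).1) = h ((S (x, y)).2, z)) := by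
  have hSS : ∀ p : X × X, S (S p) = p := fun p => congrFun hinv p
  have hb : ∀ a b z : X, h (a, (S (b, z)).1) = h ((S (a, b)).2, z) := by
    intro a b z
    have := h1 (S (a, b)).1 (S (a, b)).2 z
    rwa [show ((S (a,b)).1, (S (a,b)).2) = S (a,b) from rfl, hSS] at this
  refine ⟨fun x y z => ?_, hb⟩
  have := hb x (S (y, z)).1 (S (y, z)).2
  rw [show ((S (y,z)).1, (S (y,z)).2) = S (y,z) from rfl, hSS] at this
  exact this.symm
end Paper
end

section
/- Let (X,S,τ) be a singular pair and let U = U_nc^{fh}(X,S,τ) be the universal group with the canonical maps π_f, π_h : X×X → U. Then: (i) the pair (π_f, π_h) is a non-commutative 2-cocycle pair; (ii) for every group H and every non-commutative 2-cocycle pair f, h : X×X → H there exists a unique group homomorphism ρ : U → H with f = ρ∘π_f and h = ρ∘π_h. -/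
namespace Paper

/-- A non-commutative 2-cocycle pair for a singular pair `(X,S,τ)` with biquandle
bijection `s`, with values in a group `G`. -/
def IsNC2CocyclePair {X : Type*} (S τ : X × X → X × X) (s : X → X)
    {G : Type*} [Group G] (f h : X × X → G) : Prop :=
  -- (f1)
  (∀ x y z : X, f (x, y) * f ((S (x, y)).2, z) =
      f (x, (S (y, z)).1) * f ((S (x, (S (y, z)).1)).2, (S (y, z)).2)) ∧
  -- (f2)
  (∀ x y z : X, f ((S (x, y)).1, (S ((S (x, y)).2, z)).1) = f (y, z)) ∧
  -- (f3)
  (∀ x : X, f (x, s x) = 1) ∧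
  -- (f4)
  (∀ x y z : X, f (x, y) * f ((S (x, y)).2, z) =
      f (x, (τ (y, z)).1) * f ((S (x, (τ (y, z)).1)).2, (τ (y, z)).2)) ∧
  -- (h1)
  (∀ x y z : X, h ((S (x, y)).1, (S ((S (x, y)).2, z)).1) = h (y, z)) ∧
  -- (c1)
  (∀ x y z : X, f (x, (S (y, z)).1) * h ((S (x, (S (y, z)).1)).2, (S (y, z)).2) =
      h (x, y) * f ((τ (x, y)).2, z)) ∧
  -- (c2)
  (∀ x y z : X, f (y, z) * h ((S (x, (S (y, z)).1)).2, (S (y, z)).2) =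
      h (x, y) * f ((τ (x, y)).1, (S ((τ (x, y)).2, z)).1)) ∧
  -- (c3)
  (∀ x y : X, h (x, y) = f (x, y) * h (S (x, y))) ∧
  -- (c4)
  (∀ x y : X, h (S (x, y)) = h (x, y) * f (τ (x, y)))

/-- Generator of type `f` in the free group on `(X×X) ⊕ (X×X)`. -/
def genF {X : Type*} (p : X × X) : FreeGroup ((X × X) ⊕ (X × X)) :=
  FreeGroup.of (Sum.inl p)

/-- Generator of type `h` in the free group on `(X×X) ⊕ (X×X)`. -/
def genH {X : Type*} (p : X × X) : FreeGroup ((X × X) ⊕ (X × X)) :=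
  FreeGroup.of (Sum.inr p)

/-- The relations of the universal group `U_nc^{fh}(X,S,τ)`. -/
def uncRels {X : Type*} (S τ : X × X → X × X) : Set (FreeGroup ((X × X) ⊕ (X × X))) :=
  ⋃ (x : X) (y : X) (z : X),
    { -- (f1)
      genF (x, y) * genF ((S (x, y)).2, z) *
        (genF (x, (S (y, z)).1) * genF ((S (x, (S (y, z)).1)).2, (S (y, z)).2))⁻¹,
      -- (f4)
      genF (x, y) * genF ((S (x, y)).2, z) *
        (genF (x, (τ (y, z)).1) * genF ((S (x, (τ (y, z)).1)).2, (τ (y, z)).2))⁻¹,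
      -- (h1)
      genH ((S (x, y)).1, (S ((S (x, y)).2, z)).1) * (genH (y, z))⁻¹,
      -- (c1)
      genF (x, (S (y, z)).1) * genH ((S (x, (S (y, z)).1)).2, (S (y, z)).2) *
        (genH (x, y) * genF ((τ (x, y)).2, z))⁻¹,
      -- (c2)
      genF (y, z) * genH ((S (x, (S (y, z)).1)).2, (S (y, z)).2) *
        (genH (x, y) * genF ((τ (x, y)).1, (S ((τ (x, y)).2, z)).1))⁻¹,
      -- (c3)
      genH (x, y) * (genF (x, y) * genH (S (x, y)))⁻¹,
      -- (c4)
      genH (S (x, y)) * (genH (x, y) * genF (τ (x, y)))⁻¹ }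

/-- The universal group `U_nc^{fh}(X,S,τ)`. -/
def Unc {X : Type*} (S τ : X × X → X × X) : Type _ :=
  PresentedGroup (uncRels S τ)

instance {X : Type*} (S τ : X × X → X × X) : Group (Unc S τ) :=
  inferInstanceAs (Group (PresentedGroup (uncRels S τ)))

/-- The universal map `π_f`. -/
def piF {X : Type*} (S τ : X × X → X × X) : X × X → Unc S τ :=
  fun p => PresentedGroup.of (rels := uncRels S τ) (Sum.inl p)

/-- The universal map `π_h`. -/
def piH {X : Type*} (S τ : X × X → X × X) : X × X → Unc S τ :=
  fun p => PresentedGroup.of (rels := uncRels S τ) (Sum.inr p)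

section Cocycle

variable {X : Type*} {S : X × X → X × X} {G : Type*} [Group G] {f h : X × X → G}

/-- By (c3), `f = h · (h ∘ S)⁻¹`; the Yang–Baxter equation moves the pair on the left of (f2) by
`S` to a pair of the same shape, so two applications of (h1) give (f2). -/
theorem f2_of_yangBaxter_of_h1_of_c3
    (hYB : onSnd S ∘ onFst S ∘ onSnd S = onFst S ∘ onSnd S ∘ onFst S)
    (h1 : ∀ x y z : X, h ((S (x, y)).1, (S ((S (x, y)).2, z)).1) = h (y, z))
    (c3 : ∀ x y : X, h (x, y) = f (x, y) * h (S (x, y))) (x y z : X) :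
    f ((S (x, y)).1, (S ((S (x, y)).2, z)).1) = f (y, z) := by
  have f_eq (p : X × X) : f p = h p * (h (S p))⁻¹ := eq_mul_inv_of_mul_eq (c3 p.1 p.2).symm
  have hyb := congrFun hYB (x, y, z)
  simp only [Function.comp_apply, onFst, onSnd, Prod.mk.injEq] at hyb
  have hS : S ((S (x, y)).1, (S ((S (x, y)).2, z)).1) =
      ((S (x, (S (y, z)).1)).1, (S ((S (x, (S (y, z)).1)).2, (S (y, z)).2)).1) :=
    Prod.ext hyb.1.symm (congrArg Prod.fst hyb.2).symm
  rw [f_eq, f_eq, h1, hS, h1]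

theorem f3_of_c3 {s : X → X} (hfix : ∀ x : X, S (x, s x) = (x, s x))
    (c3 : ∀ x y : X, h (x, y) = f (x, y) * h (S (x, y))) (x : X) : f (x, s x) = 1 := by
  have hc3 := c3 x (s x)
  rw [hfix x] at hc3
  exact mul_eq_right.1 hc3.symm

variable (τ : X × X → X × X)

/-- `uncRels` omits (f2) and (f3); the two lemmas above recover them. -/
theorem isNC2CocyclePair_iff_lift_uncRels
    (hYB : onSnd S ∘ onFst S ∘ onSnd S = onFst S ∘ onSnd S ∘ onFst S) {s : X → X}
    (hfix : ∀ x : X, S (x, s x) = (x, s x)) :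
    IsNC2CocyclePair S τ s f h ↔ ∀ r ∈ uncRels S τ, FreeGroup.lift (Sum.elim f h) r = 1 := by
  change _ ↔ uncRels S τ ⊆ (FreeGroup.lift (Sum.elim f h)).ker
  simp only [uncRels, Set.iUnion_subset_iff, Set.insert_subset_iff, Set.singleton_subset_iff,
    SetLike.mem_coe, MonoidHom.mem_ker, genF, genH, map_mul, map_inv,
    FreeGroup.lift_apply_of, Sum.elim_inl, Sum.elim_inr, mul_inv_eq_one]
  constructor
  · rintro ⟨f1, -, -, f4, h1, c1, c2, c3, c4⟩ x y z
    exact ⟨f1 x y z, f4 x y z, h1 x y z, c1 x y z, c2 x y z, c3 x y, c4 x y⟩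
  · intro hrel
    have c3 (x y : X) := (hrel x y x).2.2.2.2.2.1
    exact ⟨fun x y z => (hrel x y z).1,
      f2_of_yangBaxter_of_h1_of_c3 hYB (fun x y z => (hrel x y z).2.2.1) c3,
      f3_of_c3 hfix c3, fun x y z => (hrel x y z).2.1, fun x y z => (hrel x y z).2.2.1,
      fun x y z => (hrel x y z).2.2.2.1, fun x y z => (hrel x y z).2.2.2.2.1, c3,
      fun x y => (hrel x y x).2.2.2.2.2.2⟩

end Cocycle

theorem lift_piF_piH_uncRels {X : Type*} (S τ : X × X → X × X) :
    ∀ r ∈ uncRels S τ, FreeGroup.lift (Sum.elim (piF S τ) (piH S τ)) r = 1 := by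
  have hmk : FreeGroup.lift (Sum.elim (piF S τ) (piH S τ)) = PresentedGroup.mk (uncRels S τ) :=
    FreeGroup.ext_hom _ _ fun p => by cases p <;> rfl
  exact fun r hr => hmk ▸ PresentedGroup.one_of_mem hr

theorem Unc_universal_general {X : Type*} (S τ : X × X → X × X) (hsp : IsSingularPair S τ)
    (s : X → X)
    (hsfix : ∀ x y : X, S (x, y) = (x, y) ↔ y = s x) :
    IsNC2CocyclePair S τ s (piF S τ) (piH S τ) ∧
      ∀ (H : Type*) [Group H] (f h : X × X → H), IsNC2CocyclePair S τ s f h →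
        ∃! ρ : Unc S τ →* H,
          (∀ p : X × X, ρ (piF S τ p) = f p) ∧ (∀ p : X × X, ρ (piH S τ p) = h p) := by
  have hYB := hsp.1.1.2
  have hfix (x : X) : S (x, s x) = (x, s x) := (hsfix x (s x)).2 rfl
  refine ⟨(isNC2CocyclePair_iff_lift_uncRels τ hYB hfix).2 (lift_piF_piH_uncRels S τ), ?_⟩
  intro H _ f h hfh
  have hrel := (isNC2CocyclePair_iff_lift_uncRels τ hYB hfix).1 hfh
  refine ⟨PresentedGroup.toGroup hrel,
    ⟨fun _ => PresentedGroup.toGroup.of hrel, fun _ => PresentedGroup.toGroup.of hrel⟩, ?_⟩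
  rintro ρ ⟨hρf, hρh⟩
  exact MonoidHom.ext fun _ => PresentedGroup.toGroup.unique hrel ρ fun
    | .inl p => hρf p
    | .inr p => hρh p

/-- `(π_f, π_h)` is a non-commutative 2-cocycle pair, and it is universal:
every non-commutative 2-cocycle pair factors uniquely through `U_nc^{fh}(X,S,τ)`. -/
theorem Unc_universal {X : Type*} (S τ : X × X → X × X) (hsp : IsSingularPair S τ)
    (s : X → X) (hsbij : Function.Bijective s)
    (hsfix : ∀ x y : X, S (x, y) = (x, y) ↔ y = s x) :
    IsNC2CocyclePair S τ s (piF S τ) (piH S τ) ∧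
      ∀ (H : Type*) [Group H] (f h : X × X → H), IsNC2CocyclePair S τ s f h →
        ∃! ρ : Unc S τ →* H,
          (∀ p : X × X, ρ (piF S τ p) = f p) ∧ (∀ p : X × X, ρ (piH S τ p) = h p) :=
  Unc_universal_general S τ hsp s hsfix

end Paper
end

section
/- Let (X,S) be a biquandle with associated bijection s : X → X, let H be an abelian group (written multiplicatively), and let f : X×X → H satisfy (f1') f(x,y)·f(S²(x,y),z)·f(S¹(x,y), S¹(S²(x,y),z)) = f(x,S¹(y,z))·f(S²(x,S¹(y,z)),S²(y,z))·f(y,z), (f2') f(x, s(x)) = 1, and f∘S = f. Then (X,S,S⁻¹) is a singular pair and, setting h(x,y) := f(x,y)⁻¹, the pair (f, h) is an abelian 2-cocycle pair for (X,S,S⁻¹). -/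
namespace Paper

/-- An abelian 2-cocycle pair for a singular pair `(X,S,τ)` with biquandle bijection `s`,
with values in a commutative group `H`. -/
def IsAb2CocyclePair {X : Type*} (S τ : X × X → X × X) (s : X → X)
    {H : Type*} [CommGroup H] (f h : X × X → H) : Prop :=
  -- (f1')
  (∀ x y z : X,
    f (x, y) * f ((S (x, y)).2, z) * f ((S (x, y)).1, (S ((S (x, y)).2, z)).1) =
      f (x, (S (y, z)).1) * f ((S (x, (S (y, z)).1)).2, (S (y, z)).2) * f (y, z)) ∧
  -- (f2')
  (∀ x : X, f (x, s x) = 1) ∧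
  -- (c1')
  (∀ x y z : X,
    h (y, z) * f (x, (τ (y, z)).1) * f ((S (x, (τ (y, z)).1)).2, (τ (y, z)).2) =
      f (x, y) * f ((S (x, y)).2, z) * h ((S (x, y)).1, (S ((S (x, y)).2, z)).1)) ∧
  -- (c2')
  (∀ x y z : X,
    f (y, z) * f (x, (S (y, z)).1) * h ((S (x, (S (y, z)).1)).2, (S (y, z)).2) =
      h (x, y) * f ((τ (x, y)).2, z) * f ((τ (x, y)).1, (S ((τ (x, y)).2, z)).1)) ∧
  -- (c3')
  (∀ x y : X, f (x, y) * h (S (x, y)) = h (x, y) * f (τ (x, y)))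

private lemma aux_mul1 {H : Type*} [CommGroup H] (A B C D E W : H) (h : A*B*C = D*E*W) :
    W⁻¹*A*B = D*E*C⁻¹ := by
  have h2 : A*B = D*E*W*C⁻¹ := by rw [← h]; group
  rw [mul_assoc, h2, mul_comm (D*E) W, ← mul_assoc, inv_mul_cancel_left]

private lemma aux_mul2 {H : Type*} [CommGroup H] (U W A P Q V : H) (h : U*W*A = P*Q*V) :
    W*A*Q⁻¹ = U⁻¹*V*P := by
  have h2 : W*A = U⁻¹*(P*Q*V) := by rw [← h]; group
  rw [h2, mul_comm (P*Q) V, ← mul_assoc V P Q, ← mul_assoc U⁻¹ (V*P) Q,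
    mul_inv_cancel_right, mul_assoc]

private lemma onFst_onFst {X : Type*} {F G : X × X → X × X} (h : ∀ q, F (G q) = q)
    (p : X × X × X) : onFst F (onFst G p) = p := by
  show ((F (G (p.1, p.2.1))).1, (F (G (p.1, p.2.1))).2, p.2.2) = p
  rw [h]

private lemma onSnd_onSnd {X : Type*} {F G : X × X → X × X} (h : ∀ q, F (G q) = q)
    (p : X × X × X) : onSnd F (onSnd G p) = p := by
  show (p.1, F (G p.2)) = p
  rw [h]

/-- if `f` satisfies (f1'), (f2') and `f ∘ S = f`, then `(X,S,S⁻¹)` is a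
singular pair and `(f, f⁻¹)` is an abelian 2-cocycle pair for it. -/
theorem ab2cocycle_pair_f_finv {X : Type*} {H : Type*} [CommGroup H]
    (S : X × X → X × X) (hS : IsBiquandle S)
    (S' : X × X → X × X)
    (hS'l : Function.LeftInverse S' S) (hS'r : Function.RightInverse S' S)
    (s : X → X) (hsbij : Function.Bijective s)
    (hsfix : ∀ x y : X, S (x, y) = (x, y) ↔ y = s x)
    (f : X × X → H)
    (hf1 : ∀ x y z : X,
      f (x, y) * f ((S (x, y)).2, z) * f ((S (x, y)).1, (S ((S (x, y)).2, z)).1) =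
        f (x, (S (y, z)).1) * f ((S (x, (S (y, z)).1)).2, (S (y, z)).2) * f (y, z))
    (hf2 : ∀ x : X, f (x, s x) = 1)
    (hfS : f ∘ S = f) :
    IsSingularPair S S' ∧ IsAb2CocyclePair S S' s f (fun p => (f p)⁻¹) := by
  have hS0 := hS
  obtain ⟨⟨hbij, hYBc⟩, hL, hR, -⟩ := hS
  have hYB' : ∀ p, onSnd S (onFst S (onSnd S p)) = onFst S (onSnd S (onFst S p)) :=
    fun p => congrFun hYBc p
  have hfS' : ∀ p, f (S p) = f p := fun p => congrFun hfS p
  have hfS'' : ∀ p, f (S' p) = f p := fun p => by rw [← hfS' (S' p), hS'r]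
  have hbij' : Function.Bijective S' := ⟨hS'r.injective, hS'l.surjective⟩
  have hL' : LeftInvertible S' := by
    intro x z
    obtain ⟨b, hb, hbu⟩ := hL z x
    have hSzb : S (z, b) = (x, (S (z, b)).2) := Prod.ext hb rfl
    refine ⟨(S (z, b)).2, ?_, ?_⟩
    · have h1 : S' (x, (S (z, b)).2) = (z, b) := by rw [← hSzb, hS'l]
      show (S' (x, (S (z, b)).2)).1 = z
      rw [h1]
    · intro y' hy'
      have hy'' : (S' (x, y')).1 = z := hy'
      have h1 : S' (x, y') = (z, (S' (x, y')).2) := Prod.ext hy'' rfl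
      have h2 : S (z, (S' (x, y')).2) = (x, y') := by rw [← h1, hS'r]
      have h3 : (S' (x, y')).2 = b := hbu _ (show (S (z, (S' (x, y')).2)).1 = x by rw [h2])
      rw [h3] at h2
      rw [h2]
  have hR' : RightInvertible S' := by
    intro y t
    obtain ⟨a, ha, hau⟩ := hR t y
    have hSat : S (a, t) = ((S (a, t)).1, y) := Prod.ext rfl ha
    refine ⟨(S (a, t)).1, ?_, ?_⟩
    · have h1 : S' ((S (a, t)).1, y) = (a, t) := by rw [← hSat, hS'l]
      show (S' ((S (a, t)).1, y)).2 = t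
      rw [h1]
    · intro x' hx'
      have hx'' : (S' (x', y)).2 = t := hx'
      have h1 : S' (x', y) = ((S' (x', y)).1, t) := Prod.ext rfl hx''
      have h2 : S ((S' (x', y)).1, t) = (x', y) := by rw [← h1, hS'r]
      have h3 : (S' (x', y)).1 = a := hau _ (show (S ((S' (x', y)).1, t)).2 = y by rw [h2])
      rw [h3] at h2
      rw [h2]
  have hcomm : S' ∘ S = S ∘ S' := by
    funext p
    show S' (S p) = S (S' p)
    rw [hS'l, hS'r]
  have heq1 : onFst S ∘ onSnd S ∘ onFst S' = onSnd S' ∘ onFst S ∘ onSnd S := by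
    funext p
    have h1 := hYB' (onFst S' p)
    rw [onFst_onFst hS'r] at h1
    show onFst S (onSnd S (onFst S' p)) = onSnd S' (onFst S (onSnd S p))
    rw [← h1, onSnd_onSnd hS'l]
  have heq2 : onSnd S ∘ onFst S ∘ onSnd S' = onFst S' ∘ onSnd S ∘ onFst S := by
    funext p
    have h1 := hYB' (onSnd S' p)
    rw [onSnd_onSnd hS'r] at h1
    show onSnd S (onFst S (onSnd S' p)) = onFst S' (onSnd S (onFst S p))
    rw [h1, onFst_onFst hS'l]
  refine ⟨⟨hS0, hbij', hL', hR', hcomm, heq1, heq2⟩, hf1, hf2, ?_, ?_, ?_⟩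
  · -- (c1')
    intro x y z
    beta_reduce
    set a := (S' (y, z)).1 with ha
    set b := (S' (y, z)).2 with hb
    have hab : S (a, b) = (y, z) := hS'r (y, z)
    have hfab : f (a, b) = f (y, z) := by rw [← hab, hfS']
    have h := hYB' (x, a, b)
    simp only [onFst, onSnd, hab] at h
    have key : S ((S (x, a)).1, (S ((S (x, a)).2, b)).1) =
        ((S (x, y)).1, (S ((S (x, y)).2, z)).1) := by
      have h1 := congrArg (fun t : X × X × X => t.1) h
      have h2 := congrArg (fun t : X × X × X => t.2.1) h
      dsimp only at h1 h2
      exact Prod.ext h1.symm h2.symm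
    have keyf : f ((S (x, a)).1, (S ((S (x, a)).2, b)).1) =
        f ((S (x, y)).1, (S ((S (x, y)).2, z)).1) := by
      rw [← key, hfS']
    have h2 := hf1 x a b
    simp only [hab] at h2
    rw [hfab, keyf] at h2
    exact aux_mul1 _ _ _ _ _ _ h2
  · -- (c2')
    intro x y z
    beta_reduce
    set a := (S' (x, y)).1 with ha
    set b := (S' (x, y)).2 with hb
    have hab : S (a, b) = (x, y) := hS'r (x, y)
    have hfab : f (a, b) = f (x, y) := by rw [← hab, hfS']
    have h := hYB' (a, b, z)
    simp only [onFst, onSnd, hab] at h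
    have key : S ((S (a, (S (b, z)).1)).2, (S (b, z)).2) =
        ((S (x, (S (y, z)).1)).2, (S (y, z)).2) := by
      have h1 := congrArg (fun t : X × X × X => t.2.1) h
      have h2 := congrArg (fun t : X × X × X => t.2.2) h
      dsimp only at h1 h2
      exact Prod.ext h1 h2
    have keyf : f ((S (a, (S (b, z)).1)).2, (S (b, z)).2) =
        f ((S (x, (S (y, z)).1)).2, (S (y, z)).2) := by
      rw [← key, hfS']
    have h2 := hf1 a b z
    simp only [hab] at h2
    rw [hfab, keyf] at h2
    exact aux_mul2 _ _ _ _ _ _ h2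
  · -- (c3')
    intro x y
    beta_reduce
    rw [hfS' (x, y), hfS'' (x, y)]
    group

end Paper
end
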